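/- arXiv:math/0607755 — 7 statements merged into one kernel-verified Lean document; each statement's English description precedes it below -/
import Mathlib

section
/- Let A₁, …, A_n be positive semidefinite m × m complex (Hermitian) matrices and B a Hermitian m × m matrix. Then the polynomial f(z₁,…,z_n) = det(z₁A₁ + ⋯ + z_nA_n + B) is either identically zero or real stable, i.e., it has real coefficients and f(z₁,…,z_n) ≠ 0 whenever Im(z_j) > 0 for all j. -/
/-!
If `(∑ zⱼ Aⱼ + B) v = 0` with every `Im zⱼ > 0`, then the imaginary part of `v* (∑ zⱼ Aⱼ + B) v = 0`
is `∑ Im zⱼ · v* Aⱼ v`, a sum of nonnegative terms, so `v* Aⱼ v = 0`, hence `Aⱼ v = 0` for all `j`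
and then `B v = 0`. Thus a zero in the upper half-plane produces a common kernel vector, and that
forces the determinant to vanish identically. The coefficients are real because conjugating them
transposes the pencil, the `Aⱼ` and `B` being Hermitian.
-/

open MvPolynomial ComplexOrder

/-- A polynomial `f ∈ ℂ[z₁,…,zₙ]` is stable if it does not vanish whenever all
variables have positive imaginary part. -/
def MvStable {n : ℕ} (f : MvPolynomial (Fin n) ℂ) : Prop :=
  ∀ z : Fin n → ℂ, (∀ j, 0 < (z j).im) → MvPolynomial.eval z f ≠ 0

open Matrix

variable {σ ι R : Type*} [Fintype σ]

noncomputable def linearPencil [CommRing R] (A : σ → Matrix ι ι R) (B : Matrix ι ι R) :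
    Matrix ι ι (MvPolynomial σ R) :=
  of fun i k => (∑ j, X j * C (A j i k)) + C (B i k)

section CommRing

variable [CommRing R] {A : σ → Matrix ι ι R} {B : Matrix ι ι R}

lemma linearPencil_map_eval (z : σ → R) :
    (linearPencil A B).map (eval z) = ∑ j, z j • A j + B := by
  ext i k
  simp [linearPencil, Matrix.sum_apply, mul_comm]

lemma linearPencil_map_star [StarRing R] (hA : ∀ j, (A j).IsHermitian) (hB : B.IsHermitian) :
    (linearPencil A B).map (map (starRingEnd R)) = (linearPencil A B)ᵀ := by
  ext i k
  simp [linearPencil, starRingEnd_apply, (hA _).apply k i, hB.apply k i]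

variable [Fintype ι] [DecidableEq ι]

lemma eval_det_linearPencil (z : σ → R) :
    eval z (linearPencil A B).det = (∑ j, z j • A j + B).det := by
  rw [RingHom.map_det, RingHom.mapMatrix_apply, linearPencil_map_eval]

lemma map_star_det_linearPencil [StarRing R] (hA : ∀ j, (A j).IsHermitian)
    (hB : B.IsHermitian) :
    map (starRingEnd R) (linearPencil A B).det = (linearPencil A B).det := by
  rw [RingHom.map_det, RingHom.mapMatrix_apply, linearPencil_map_star hA hB, det_transpose]

end CommRing

section Complex

variable [Fintype ι] {A : σ → Matrix ι ι ℂ} {B : Matrix ι ι ℂ}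

lemma im_coeff_det_linearPencil [DecidableEq ι] (hA : ∀ j, (A j).IsHermitian)
    (hB : B.IsHermitian) (d : σ →₀ ℕ) : ((linearPencil A B).det.coeff d).im = 0 := by
  rw [← Complex.conj_eq_iff_im, ← coeff_map, map_star_det_linearPencil hA hB]

lemma det_linearPencil_eq_zero_of_mulVec_eq_zero [DecidableEq ι] {v : ι → ℂ} (hv : v ≠ 0)
    (hAv : ∀ j, A j *ᵥ v = 0) (hBv : B *ᵥ v = 0) : (linearPencil A B).det = 0 := by
  refine MvPolynomial.funext fun z => ?_
  rw [eval_det_linearPencil, map_zero, ← exists_mulVec_eq_zero_iff]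
  exact ⟨v, hv, by simp [add_mulVec, sum_mulVec, smul_mulVec, hAv, hBv]⟩

lemma mulVec_eq_zero_of_sum_smul_add_mulVec_eq_zero (hA : ∀ j, (A j).PosSemidef)
    (hB : B.IsHermitian) {z : σ → ℂ} (hz : ∀ j, 0 < (z j).im) {v : ι → ℂ}
    (hv : (∑ j, z j • A j + B) *ᵥ v = 0) : (∀ j, A j *ᵥ v = 0) ∧ B *ᵥ v = 0 := by
  set a : σ → ℂ := fun j => star v ⬝ᵥ A j *ᵥ v
  have ha_nonneg : ∀ j, 0 ≤ a j := fun j => (hA j).dotProduct_mulVec_nonneg v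
  have hquad : ∑ j, z j * a j + star v ⬝ᵥ B *ᵥ v = 0 := by
    simpa [a, add_mulVec, sum_mulVec, smul_mulVec, dotProduct_sum] using
      congrArg (star v ⬝ᵥ ·) hv
  have him : ∑ j, (z j).im * (a j).re = 0 := by
    simpa [Complex.im_sum, Complex.mul_im, (Complex.nonneg_iff.mp (ha_nonneg _)).2.symm,
      show (star v ⬝ᵥ B *ᵥ v).im = 0 from hB.im_star_dotProduct_mulVec_self v] using
      congrArg Complex.im hquad
  have ha : ∀ j, a j = 0 := by
    intro j
    have hterm := (Finset.sum_eq_zero_iff_of_nonneg fun j _ =>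
      mul_nonneg (hz j).le (Complex.nonneg_iff.mp (ha_nonneg j)).1).mp him j (Finset.mem_univ j)
    exact Complex.ext ((mul_eq_zero.mp hterm).resolve_left (hz j).ne')
      (Complex.nonneg_iff.mp (ha_nonneg j)).2.symm
  have hAv : ∀ j, A j *ᵥ v = 0 := fun j => ((hA j).dotProduct_mulVec_zero_iff v).mp (ha j)
  refine ⟨hAv, ?_⟩
  simpa [add_mulVec, sum_mulVec, smul_mulVec, hAv] using hv

end Complex

theorem stmt0 (n m : ℕ) (A : Fin n → Matrix (Fin m) (Fin m) ℂ)
    (hA : ∀ j, (A j).PosSemidef) (B : Matrix (Fin m) (Fin m) ℂ) (hB : B.IsHermitian) :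
    let P : MvPolynomial (Fin n) ℂ :=
      (Matrix.of fun i k : Fin m =>
        (∑ j, MvPolynomial.X j * MvPolynomial.C (A j i k)) + MvPolynomial.C (B i k)).det
    P = 0 ∨ ((∀ d, (P.coeff d).im = 0) ∧ MvStable P) := by
  show (linearPencil A B).det = 0 ∨
    ((∀ d, ((linearPencil A B).det.coeff d).im = 0) ∧ MvStable (linearPencil A B).det)
  by_cases hker : ∃ v, v ≠ 0 ∧ (∀ j, A j *ᵥ v = 0) ∧ B *ᵥ v = 0
  · obtain ⟨v, hv, hAv, hBv⟩ := hker
    exact Or.inl (det_linearPencil_eq_zero_of_mulVec_eq_zero hv hAv hBv)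
  · refine Or.inr ⟨im_coeff_det_linearPencil (fun j => (hA j).isHermitian) hB, fun z hz hPz => ?_⟩
    rw [eval_det_linearPencil] at hPz
    obtain ⟨v, hv, hMv⟩ := exists_mulVec_eq_zero_iff.mpr hPz
    exact hker ⟨v, hv, mulVec_eq_zero_of_sum_smul_add_mulVec_eq_zero hA hB hz hMv⟩
end

section
/- Let A and B be Hermitian n × n matrices with A positive semidefinite. Then the polynomial η(zA, −B) = Σ_S det(zA[S]) det(−B[S′]) (the sum over all subsets S of {1,…,n}, with S′ the complement) has all real roots (or is identically zero). -/
/-!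
`η(zA, B)` is the coefficient of `x₁⋯xₙ` in `P(x, z) = det (diag x + zA) · det (diag x + B)`,
because `det (diag x + M) = ∑_S x^{Sᶜ} det M[S]`. For `A ⪰ 0` and `B` Hermitian, `P` has no zeros
when `z` and all `xᵢ` lie in the open upper half-plane: the Hermitian form of each factor has
positive imaginary part. The operators `u + ∂ᵢ` with `u > 0` preserve this stability (the
logarithmic derivative `p'/p = ∑ 1/(t - r)` has negative imaginary part there), and so does the
substitution `xᵢ = iu`. The resulting stable polynomials in `z` have degree at most `n` and tend
to `η(zA, B)` as `u → 0⁺`, so by Hurwitz's theorem `η(zA, B)` is zero or stable; having real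
coefficients, it then has only real roots.
-/

open Polynomial ComplexOrder

/-- The principal submatrix of `A` with rows and columns indexed by `S`. -/
def principalSub {ι : Type*} (A : Matrix ι ι ℂ) (S : Finset ι) : Matrix S S ℂ :=
  A.submatrix Subtype.val Subtype.val

/-- `η(zA, B) = Σ_S det(A[S]) det(B[S']) z^{|S|}`, as a polynomial in `z`. -/
noncomputable def etaPoly {ι : Type*} [Fintype ι] [DecidableEq ι]
    (A B : Matrix ι ι ℂ) : Polynomial ℂ :=
  ∑ S : Finset ι,
    Polynomial.C ((principalSub A S).det * (principalSub B Sᶜ).det) * Polynomial.X ^ S.card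

open Filter Topology

namespace Matrix

variable {R ι : Type*} [CommRing R] [Fintype ι] [DecidableEq ι]

theorem det_piecewise_diagonal (M : Matrix ι ι R) (d : ι → R) (S : Finset ι) :
    (of (S.piecewise M (diagonal d))).det =
      (M.submatrix ((↑) : S → ι) (↑)).det * ∏ i ∈ Sᶜ, d i := by
  let e := Equiv.sumCompl (· ∈ S)
  rw [← det_submatrix_equiv_self e]
  have hblocks : (of (S.piecewise M (diagonal d))).submatrix e e =
      fromBlocks (M.submatrix ((↑) : S → ι) (↑)) (M.submatrix (↑) (↑)) 0
        (diagonal fun i : {i // i ∉ S} => d i) := by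
    ext (i | i) (j | j) <;> simp [e, Finset.piecewise, i.2, diagonal_apply, Subtype.ext_iff]
    exact fun h => absurd (h ▸ j.2) i.2
  rw [hblocks, det_fromBlocks_zero₂₁, det_diagonal,
    Finset.prod_subtype Sᶜ (fun _ => Finset.mem_compl) d]

theorem det_diagonal_add (d : ι → R) (M : Matrix ι ι R) :
    (diagonal d + M).det =
      ∑ S : Finset ι, (∏ i ∈ Sᶜ, d i) * (M.submatrix ((↑) : S → ι) (↑)).det := by
  rw [add_comm]
  refine (detRowAlternating.map_add_univ (R := R) M (diagonal d)).trans
    (Finset.sum_congr rfl fun S _ => ?_)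
  exact (det_piecewise_diagonal M d S).trans (mul_comm _ _)

/-- The Hermitian form of `diagonal x + M` has positive imaginary part, so it has no kernel. -/
theorem det_diagonal_add_ne_zero {M : Matrix ι ι ℂ} (hM : ∀ w, 0 ≤ (star w ⬝ᵥ M *ᵥ w).im)
    {x : ι → ℂ} (hx : ∀ i, 0 < (x i).im) : (diagonal x + M).det ≠ 0 := by
  intro hdet
  obtain ⟨w, hw0, hw⟩ := exists_mulVec_eq_zero_iff.mpr hdet
  obtain ⟨i, hi⟩ := Function.ne_iff.mp hw0
  have hdiag : 0 < (star w ⬝ᵥ diagonal x *ᵥ w).im := by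
    have : (star w ⬝ᵥ diagonal x *ᵥ w).im = ∑ j, (x j).im * Complex.normSq (w j) := by
      simp only [dotProduct, mulVec_diagonal, Complex.im_sum]
      refine Finset.sum_congr rfl fun j _ => ?_
      simp [Complex.normSq_apply]
      ring
    rw [this]
    exact Finset.sum_pos' (fun j _ => mul_nonneg (hx j).le (Complex.normSq_nonneg _))
      ⟨i, Finset.mem_univ _, mul_pos (hx i) (Complex.normSq_pos.mpr (by simpa using hi))⟩
  have := congrArg Complex.im (congrArg (star w ⬝ᵥ ·) hw)
  simp only [add_mulVec, dotProduct_add, Complex.add_im, dotProduct_zero, Complex.zero_im] at this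
  linarith [hM w]

omit [DecidableEq ι] in
theorem PosSemidef.im_smul_quadForm_nonneg {A : Matrix ι ι ℂ} (hA : A.PosSemidef) {z : ℂ}
    (hz : 0 ≤ z.im) (w : ι → ℂ) : 0 ≤ (star w ⬝ᵥ (z • A) *ᵥ w).im := by
  obtain ⟨hre, him⟩ := Complex.nonneg_iff.mp (hA.dotProduct_mulVec_nonneg w)
  rw [smul_mulVec, dotProduct_smul, smul_eq_mul, Complex.mul_im, ← him]
  simpa using mul_nonneg hz hre

theorem IsHermitian.star_det {B : Matrix ι ι ℂ} (hB : B.IsHermitian) : star B.det = B.det := by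
  rw [← det_conjTranspose, hB.eq]

end Matrix

namespace Polynomial

def UpperStable (p : ℂ[X]) : Prop :=
  ∀ z : ℂ, 0 < z.im → p.eval z ≠ 0

namespace UpperStable

variable {p : ℂ[X]}

theorem im_nonpos_of_mem_roots (hp : p.UpperStable) {r : ℂ} (hr : r ∈ p.roots) : r.im ≤ 0 :=
  not_lt.mp fun h => hp r h (mem_roots'.mp hr).2

theorem im_inv_sub_neg (hp : p.UpperStable) {z r : ℂ} (hz : 0 < z.im) (hr : r ∈ p.roots) :
    (1 / (z - r)).im < 0 := by
  have him : 0 < (z - r).im := by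
    rw [Complex.sub_im]; linarith [hp.im_nonpos_of_mem_roots hr]
  rw [one_div, Complex.inv_im, neg_div]
  exact neg_neg_of_pos (div_pos him (Complex.normSq_pos.mpr fun h => by simp [h] at him))

/-- At a point `z` of the upper half-plane, `p'(z) / p(z) = ∑ 1 / (z - r)` has negative imaginary
part unless `p` has no roots. -/
theorem C_mul_add_derivative (hp : p.UpperStable) {u : ℝ} (hu : 0 < u) :
    (C (u : ℂ) * p + derivative p).UpperStable := by
  intro z hz
  have hpz := hp z hz
  have hsplit := IsAlgClosed.splits p
  rw [eval_add, eval_mul, eval_C, hsplit.eval_derivative_eq_eval_mul_sum hpz, mul_comm,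
    ← mul_add]
  refine mul_ne_zero hpz fun hsum => ?_
  rcases eq_or_ne p.roots 0 with hempty | hne
  · rw [hempty, Multiset.map_zero, Multiset.sum_zero, add_zero] at hsum
    exact hu.ne' (by exact_mod_cast hsum)
  · have him : ((p.roots.map fun r => 1 / (z - r)).sum).im < 0 := by
      rw [← Complex.coe_imAddGroupHom, map_multiset_sum, Multiset.map_map]
      simpa using Multiset.sum_lt_sum_of_nonempty (g := fun _ => (0 : ℝ)) hne
        fun r hr => hp.im_inv_sub_neg hz hr
    have := congrArg Complex.im hsum
    simp only [Complex.add_im, Complex.ofReal_im, zero_add, Complex.zero_im] at this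
    exact him.ne this

/-- A quantitative form of Hurwitz's theorem: every root `r` of `p` satisfies
`‖w - r‖ ≤ 2 ‖z - r‖`, since `‖w - z‖ ≤ im z ≤ ‖z - r‖`. -/
theorem norm_eval_le (hp : p.UpperStable) {N : ℕ} (hN : p.natDegree ≤ N) {z w : ℂ}
    (hw : ‖w - z‖ ≤ z.im) : ‖p.eval w‖ ≤ 2 ^ N * ‖p.eval z‖ := by
  have hsplit := IsAlgClosed.splits p
  have hroot : ∀ r ∈ p.roots, ‖w - r‖ ≤ 2 * ‖z - r‖ := fun r hr => by
    have : z.im ≤ ‖z - r‖ := by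
      refine le_trans ?_ (Complex.abs_im_le_norm _)
      rw [Complex.sub_im]
      linarith [hp.im_nonpos_of_mem_roots hr, le_abs_self (z.im - r.im)]
    calc ‖w - r‖ = ‖(w - z) + (z - r)‖ := by ring_nf
      _ ≤ ‖w - z‖ + ‖z - r‖ := norm_add_le _ _
      _ ≤ 2 * ‖z - r‖ := by linarith
  have hcard : p.roots.card ≤ N := (card_roots' p).trans hN
  have hnorm (x : ℂ) :
      ‖(p.roots.map (x - ·)).prod‖ = (p.roots.map fun r => ‖x - r‖).prod := by
    rw [← normHom_apply, map_multiset_prod, Multiset.map_map]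
    rfl
  rw [hsplit.eval_eq_prod_roots, hsplit.eval_eq_prod_roots, norm_mul, norm_mul, hnorm, hnorm]
  calc ‖p.leadingCoeff‖ * (p.roots.map fun r => ‖w - r‖).prod
      ≤ ‖p.leadingCoeff‖ * (p.roots.map fun r => 2 * ‖z - r‖).prod := by
        gcongr
        exact Multiset.prod_map_le_prod_map₀ _ _ (fun _ _ => norm_nonneg _) hroot
    _ = 2 ^ p.roots.card * (‖p.leadingCoeff‖ * (p.roots.map fun r => ‖z - r‖).prod) := by
        rw [Multiset.prod_map_mul, Multiset.map_const', Multiset.prod_replicate]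
        ring
    _ ≤ 2 ^ N * (‖p.leadingCoeff‖ * (p.roots.map fun r => ‖z - r‖).prod) := by
        gcongr
        · exact mul_nonneg (norm_nonneg _) (Multiset.prod_nonneg fun x hx => by
            obtain ⟨r, -, rfl⟩ := Multiset.mem_map.mp hx; exact norm_nonneg _)
        · norm_num

theorem eval_conj_eq_zero (hreal : p.map (starRingEnd ℂ) = p) {z : ℂ} (hz : p.eval z = 0) :
    p.eval (starRingEnd ℂ z) = 0 := by
  rw [← hreal, eval_map, eval₂_at_apply, hz, map_zero]

theorem im_eq_zero_of_eval_eq_zero (hp : p.UpperStable) (hreal : p.map (starRingEnd ℂ) = p)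
    {z : ℂ} (hz : p.eval z = 0) : z.im = 0 := by
  rcases lt_trichotomy z.im 0 with hneg | hzero | hpos
  · exact absurd (eval_conj_eq_zero hreal hz) (hp _ (by simpa using hneg))
  · exact hzero
  · exact absurd hz (hp z hpos)

end UpperStable

/-- Hurwitz's theorem for upper stable polynomials of bounded degree. -/
theorem eq_zero_or_upperStable_of_tendsto {α : Type*} {l : Filter α} [l.NeBot] {q : α → ℂ[X]}
    {p : ℂ[X]} {N : ℕ} (hq : ∀ᶠ a in l, (q a).UpperStable ∧ (q a).natDegree ≤ N)
    (hlim : ∀ z, Tendsto (fun a => (q a).eval z) l (𝓝 (p.eval z))) :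
    p = 0 ∨ p.UpperStable := by
  refine or_iff_not_imp_left.mpr fun hp z hz hpz => hp ?_
  have hball := Metric.closedBall_mem_nhds z hz
  apply eq_zero_of_infinite_isRoot
  refine (infinite_of_mem_nhds z hball).mono fun w hw => ?_
  have hbound : ‖p.eval w‖ ≤ 2 ^ N * ‖p.eval z‖ :=
    le_of_tendsto_of_tendsto ((hlim w).norm) (((hlim z).norm).const_mul _)
      (hq.mono fun a ha => ha.1.norm_eval_le ha.2 (by simpa [dist_eq_norm] using hw))
  rw [hpz, norm_zero, mul_zero] at hbound
  exact norm_le_zero_iff.mp hbound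

end Polynomial

/-- The value of `(u + d/dx) xᵐ` at `x = iu`. -/
noncomputable def shiftWeight (u : ℝ) (m : ℕ) : ℂ :=
  u * (Complex.I * u) ^ m + m * (Complex.I * u) ^ (m - 1)

theorem shiftWeight_zero (m : ℕ) : shiftWeight 0 m = if m = 1 then 1 else 0 := by
  rcases m with _ | _ | m <;> simp [shiftWeight]

namespace MvPolynomial

theorem det_diagonal_X_add_map_C {R ι : Type*} [CommRing R] [Fintype ι] [DecidableEq ι]
    (M : Matrix ι ι R) :
    (Matrix.diagonal X + M.map C).det =
      ∑ S : Finset ι, (∏ i ∈ Sᶜ, X i) * C (M.submatrix ((↑) : S → ι) (↑)).det := by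
  rw [Matrix.det_diagonal_add]
  refine Finset.sum_congr rfl fun S _ => ?_
  rw [RingHom.map_det]
  rfl

variable {R S σ : Type*} [CommSemiring R] [CommSemiring S]

theorem prod_X_mul_prod_X [DecidableEq σ] [Fintype σ] (s t : Finset σ) :
    (∏ i ∈ s, X (R := R) i) * ∏ i ∈ t, X i =
      ∏ j, X j ^ ((if j ∈ s then 1 else 0 : ℕ) + if j ∈ t then 1 else 0) := by
  simp only [pow_add, Finset.prod_mul_distrib, pow_ite, pow_one, pow_zero, Finset.prod_ite_mem,
    Finset.univ_inter]

noncomputable def addPderiv (a : R) (i : σ) : Module.End R (MvPolynomial σ R) :=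
  a • LinearMap.id + (pderiv i).toLinearMap

theorem addPderiv_apply (a : R) (i : σ) (q : MvPolynomial σ R) :
    addPderiv a i q = C a * q + pderiv i q := by
  simp [addPderiv, smul_eq_C_mul]

theorem addPderiv_mul_of_pderiv_eq_zero (a : R) (i : σ) (p : MvPolynomial σ R)
    {q : MvPolynomial σ R} (hq : pderiv i q = 0) :
    addPderiv a i (p * q) = addPderiv a i p * q := by
  simp only [addPderiv_apply, pderiv_mul, hq]
  ring

theorem pderiv_addPderiv_X_pow_of_ne (a : R) {i j : σ} (h : j ≠ i) (m : ℕ) :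
    pderiv i (addPderiv a j (X j ^ m)) = 0 := by
  simp [addPderiv_apply, pderiv_X_of_ne h]

theorem pderiv_prod_eq_zero {i : σ} {s : Finset σ} {F : σ → MvPolynomial σ R}
    (h : ∀ j ∈ s, pderiv i (F j) = 0) : pderiv i (∏ j ∈ s, F j) = 0 :=
  Finset.prod_induction F (fun q => pderiv i q = 0)
    (fun p q hp hq => by simp [hp, hq]) pderiv_one h

theorem list_prod_addPderiv_prod_X_pow [Fintype σ] [DecidableEq σ] (a : R) {l : List σ}
    (hl : l.Nodup) (e : σ → ℕ) :
    (l.map (addPderiv a)).prod (∏ j, X j ^ e j) =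
      ∏ j, if j ∈ l then addPderiv a j (X j ^ e j) else X j ^ e j := by
  induction l with
  | nil => simp
  | cons i l ih =>
    obtain ⟨hi, hl⟩ := List.nodup_cons.mp hl
    have hrest : pderiv i (∏ j ∈ Finset.univ.erase i,
        if j ∈ l then addPderiv a j (X j ^ e j) else X j ^ e j) = 0 := by
      refine pderiv_prod_eq_zero fun j hj => ?_
      have hji := Finset.ne_of_mem_erase hj
      split_ifs
      · exact pderiv_addPderiv_X_pow_of_ne a hji _
      · simp [pderiv_X_of_ne hji]
    rw [List.map_cons, List.prod_cons, Module.End.mul_apply, ih hl,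
      ← Finset.mul_prod_erase _ _ (Finset.mem_univ i), if_neg hi,
      addPderiv_mul_of_pderiv_eq_zero a i _ hrest,
      ← Finset.mul_prod_erase _ _ (Finset.mem_univ i), if_pos List.mem_cons_self]
    congr 1
    refine Finset.prod_congr rfl fun j hj => ?_
    simp [Finset.ne_of_mem_erase hj]

theorem eval_const_list_prod_addPderiv_prod_X_pow [Fintype σ] (a w : R) (e : σ → ℕ) :
    eval (fun _ => w) ((Finset.univ.toList.map (addPderiv a)).prod (∏ j, X j ^ e j)) =
      ∏ j, (a * w ^ e j + e j * w ^ (e j - 1)) := by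
  classical
  rw [list_prod_addPderiv_prod_X_pow a (Finset.nodup_toList _), map_prod]
  refine Finset.prod_congr rfl fun j _ => ?_
  simp [addPderiv_apply]

section RestrictLine

variable [DecidableEq σ]

noncomputable def restrictLine (g : R →+* S) (x : σ → S) (i : σ) : MvPolynomial σ R →+* S[X] :=
  eval₂Hom (Polynomial.C.comp g) (Function.update (Polynomial.C ∘ x) i Polynomial.X)

theorem eval_restrictLine (g : R →+* S) (x : σ → S) (i : σ) (q : MvPolynomial σ R) (t : S) :
    (restrictLine g x i q).eval t = eval₂ g (Function.update x i t) q := by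
  rw [restrictLine, coe_eval₂Hom, ← coe_evalRingHom, eval₂_comp_left]
  congr 1
  · ext; simp
  · ext j
    rcases eq_or_ne j i with rfl | hj <;> simp [*]

theorem derivative_restrictLine (g : R →+* S) (x : σ → S) (i : σ) (q : MvPolynomial σ R) :
    derivative (restrictLine g x i q) = restrictLine g x i (pderiv i q) := by
  induction q using MvPolynomial.induction_on with
  | C a => simp [restrictLine]
  | add p q hp hq => simp only [map_add, hp, hq]
  | mul_X p j hp =>
    rw [map_mul, derivative_mul, hp, pderiv_mul, map_add, map_mul, map_mul]
    rcases eq_or_ne j i with rfl | hj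
    · simp [restrictLine]
    · simp [restrictLine, hj, pderiv_X_of_ne hj]

end RestrictLine

def UpperStable (q : MvPolynomial σ ℂ[X]) : Prop :=
  ∀ (x : σ → ℂ) (z : ℂ), (∀ i, 0 < (x i).im) → 0 < z.im → eval₂ (evalRingHom z) x q ≠ 0

theorem upperStable_addPderiv {q : MvPolynomial σ ℂ[X]} (hq : q.UpperStable)
    {u : ℝ} (hu : 0 < u) (i : σ) : (addPderiv (Polynomial.C (u : ℂ)) i q).UpperStable := by
  classical
  intro x z hx hz
  set r := restrictLine (evalRingHom z) x i q
  have hr : r.UpperStable := fun t ht => by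
    rw [eval_restrictLine]
    refine hq _ z (fun j => ?_) hz
    rcases eq_or_ne j i with rfl | hj <;> simp [*]
  have hri := hr.C_mul_add_derivative hu (x i) (hx i)
  rw [derivative_restrictLine, Polynomial.eval_add, Polynomial.eval_mul, Polynomial.eval_C,
    eval_restrictLine, eval_restrictLine, Function.update_eq_self] at hri
  simpa [addPderiv_apply] using hri

theorem upperStable_list_prod_addPderiv {q : MvPolynomial σ ℂ[X]} (hq : q.UpperStable)
    {u : ℝ} (hu : 0 < u) (l : List σ) :
    ((l.map (addPderiv (Polynomial.C (u : ℂ)))).prod q).UpperStable := by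
  induction l with
  | nil => simpa
  | cons i l ih =>
    rw [List.map_cons, List.prod_cons, Module.End.mul_apply]
    exact upperStable_addPderiv ih hu i

/-- As `u → 0⁺` this tends to the coefficient of `∏ᵢ xᵢ`, and for `u > 0` it maps stable
polynomials to stable ones. -/
noncomputable def mixedDerivApprox [Fintype σ] (u : ℝ) : MvPolynomial σ ℂ[X] →ₗ[ℂ[X]] ℂ[X] :=
  (aeval fun _ => Polynomial.C (Complex.I * u)).toLinearMap ∘ₗ
    (Finset.univ.toList.map (addPderiv (Polynomial.C (u : ℂ)))).prod

theorem mixedDerivApprox_apply [Fintype σ] (u : ℝ) (q : MvPolynomial σ ℂ[X]) :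
    mixedDerivApprox u q = eval (fun _ => Polynomial.C (Complex.I * u))
      ((Finset.univ.toList.map (addPderiv (Polynomial.C (u : ℂ)))).prod q) :=
  rfl

theorem upperStable_mixedDerivApprox [Fintype σ] {q : MvPolynomial σ ℂ[X]} (hq : q.UpperStable)
    {u : ℝ} (hu : 0 < u) : (mixedDerivApprox u q).UpperStable := by
  intro z hz
  rw [mixedDerivApprox_apply, ← coe_evalRingHom, MvPolynomial.eval, coe_eval₂Hom,
    eval₂_comp_left, RingHom.comp_id]
  refine upperStable_list_prod_addPderiv hq hu _ _ z (fun _ => ?_) hz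
  simpa using hu

theorem mixedDerivApprox_prod_X_pow_mul_C [Fintype σ] (u : ℝ) (e : σ → ℕ) (c : ℂ[X]) :
    mixedDerivApprox u ((∏ j, X j ^ e j) * C c) =
      Polynomial.C (∏ j, shiftWeight u (e j)) * c := by
  rw [mul_comm _ (C c), ← smul_eq_C_mul, LinearMap.map_smul, mixedDerivApprox_apply,
    eval_const_list_prod_addPderiv_prod_X_pow, smul_eq_mul, mul_comm, map_prod]
  simp [shiftWeight]

end MvPolynomial

section DetPair

open MvPolynomial (mixedDerivApprox mixedDerivApprox_prod_X_pow_mul_C upperStable_mixedDerivApprox)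

variable {ι : Type*} [Fintype ι] [DecidableEq ι]

omit [Fintype ι] in
theorem det_submatrix_X_smul_map_C (A : Matrix ι ι ℂ) (S : Finset ι) :
    (((X : ℂ[X]) • A.map C).submatrix ((↑) : S → ι) (↑)).det =
      X ^ S.card * C (principalSub A S).det := by
  have h : ((X : ℂ[X]) • A.map C).submatrix ((↑) : S → ι) (↑) =
      (X : ℂ[X]) • C.mapMatrix (principalSub A S) := rfl
  rw [h, Matrix.det_smul, Fintype.card_coe, ← RingHom.map_det]

/-- `det (diag x + z A) · det (diag x + B)` as a polynomial in the variables `xᵢ` over `ℂ[z]`. -/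
noncomputable def detPairPoly (A B : Matrix ι ι ℂ) : MvPolynomial ι ℂ[X] :=
  (Matrix.diagonal MvPolynomial.X + ((X : ℂ[X]) • A.map C).map MvPolynomial.C).det *
    (Matrix.diagonal MvPolynomial.X + (B.map C).map MvPolynomial.C).det

theorem detPairPoly_eq_sum (A B : Matrix ι ι ℂ) :
    detPairPoly A B = ∑ S : Finset ι, ∑ T : Finset ι,
      (∏ j, MvPolynomial.X j ^ ((if j ∈ Sᶜ then 1 else 0 : ℕ) + if j ∈ Tᶜ then 1 else 0)) *
        MvPolynomial.C (X ^ S.card * C ((principalSub A S).det * (principalSub B T).det)) := by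
  rw [detPairPoly, MvPolynomial.det_diagonal_X_add_map_C, MvPolynomial.det_diagonal_X_add_map_C,
    Finset.sum_mul_sum]
  refine Finset.sum_congr rfl fun S _ => Finset.sum_congr rfl fun T _ => ?_
  have hB : ((B.map C).submatrix ((↑) : T → ι) (↑)).det = C (principalSub B T).det :=
    (RingHom.map_det C _).symm
  rw [← MvPolynomial.prod_X_mul_prod_X, det_submatrix_X_smul_map_C, hB]
  simp only [map_mul]
  ring

theorem prod_shiftWeight_zero (S T : Finset ι) :
    ∏ j, shiftWeight 0 ((if j ∈ Sᶜ then 1 else 0 : ℕ) + if j ∈ Tᶜ then 1 else 0) =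
      if T = Sᶜ then 1 else 0 := by
  simp only [shiftWeight_zero, Finset.prod_boole, Finset.mem_univ, true_implies]
  refine if_congr ?_ rfl rfl
  simp only [Finset.ext_iff, Finset.mem_compl]
  refine forall_congr' fun j => ?_
  by_cases hS : j ∈ S <;> by_cases hT : j ∈ T <;> simp [hS, hT]

theorem mixedDerivApprox_detPairPoly (A B : Matrix ι ι ℂ) (u : ℝ) :
    mixedDerivApprox u (detPairPoly A B) = ∑ S : Finset ι, ∑ T : Finset ι,
      C (∏ j, shiftWeight u ((if j ∈ Sᶜ then 1 else 0 : ℕ) + if j ∈ Tᶜ then 1 else 0)) *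
        (X ^ S.card * C ((principalSub A S).det * (principalSub B T).det)) := by
  simp only [detPairPoly_eq_sum, map_sum, mixedDerivApprox_prod_X_pow_mul_C]

theorem mixedDerivApprox_zero_detPairPoly (A B : Matrix ι ι ℂ) :
    mixedDerivApprox 0 (detPairPoly A B) = etaPoly A B := by
  simp only [mixedDerivApprox_detPairPoly, prod_shiftWeight_zero, apply_ite C, map_one, map_zero,
    ite_mul, one_mul, zero_mul, Finset.sum_ite_eq', Finset.mem_univ, if_true, etaPoly]
  exact Finset.sum_congr rfl fun S _ => mul_comm _ _

theorem natDegree_mixedDerivApprox_detPairPoly_le (A B : Matrix ι ι ℂ) (u : ℝ) :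
    (mixedDerivApprox u (detPairPoly A B)).natDegree ≤ Fintype.card ι := by
  rw [mixedDerivApprox_detPairPoly]
  refine natDegree_sum_le_of_forall_le _ _ fun S _ =>
    natDegree_sum_le_of_forall_le _ _ fun T _ => ?_
  refine (natDegree_C_mul_le _ _).trans ((natDegree_mul_C_le _ _).trans ?_)
  rw [natDegree_X_pow]
  exact S.card_le_univ

theorem continuous_eval_mixedDerivApprox_detPairPoly (A B : Matrix ι ι ℂ) (z : ℂ) :
    Continuous fun u => (mixedDerivApprox u (detPairPoly A B)).eval z := by
  simp only [mixedDerivApprox_detPairPoly, eval_finsetSum, eval_mul, eval_C, shiftWeight]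
  fun_prop

theorem eval₂_det_diagonal_X_add_map_C (M : Matrix ι ι ℂ[X]) (x : ι → ℂ) (z : ℂ) :
    MvPolynomial.eval₂ (evalRingHom z) x
        (Matrix.diagonal MvPolynomial.X + M.map MvPolynomial.C).det =
      (Matrix.diagonal x + M.map (eval z)).det := by
  rw [← MvPolynomial.coe_eval₂Hom, RingHom.map_det]
  congr 1
  ext i j
  by_cases h : i = j <;> simp [h]

theorem upperStable_detPairPoly {A B : Matrix ι ι ℂ} (hA : A.PosSemidef) (hB : B.IsHermitian) :
    (detPairPoly A B).UpperStable := by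
  intro x z hx hz
  have hAz : ((X : ℂ[X]) • A.map C).map (eval z) = z • A := by
    ext; simp only [Matrix.map_apply, Matrix.smul_apply, smul_eq_mul, eval_mul, eval_X, eval_C]
  have hBz : (B.map C).map (eval z) = B := by ext; simp
  rw [detPairPoly, MvPolynomial.eval₂_mul, eval₂_det_diagonal_X_add_map_C,
    eval₂_det_diagonal_X_add_map_C, hAz, hBz]
  exact mul_ne_zero (Matrix.det_diagonal_add_ne_zero (hA.im_smul_quadForm_nonneg hz.le) hx)
    (Matrix.det_diagonal_add_ne_zero (fun w => (hB.im_star_dotProduct_mulVec_self w).ge) hx)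

theorem etaPoly_eq_zero_or_upperStable {A B : Matrix ι ι ℂ} (hA : A.PosSemidef)
    (hB : B.IsHermitian) : etaPoly A B = 0 ∨ (etaPoly A B).UpperStable := by
  refine eq_zero_or_upperStable_of_tendsto (l := 𝓝[>] (0 : ℝ))
    (q := fun u => mixedDerivApprox u (detPairPoly A B)) (N := Fintype.card ι) ?_
    fun z => ?_
  · filter_upwards [self_mem_nhdsWithin] with u hu
    exact ⟨upperStable_mixedDerivApprox (upperStable_detPairPoly hA hB) hu,
      natDegree_mixedDerivApprox_detPairPoly_le A B u⟩
  · rw [← mixedDerivApprox_zero_detPairPoly]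
    exact ((continuous_eval_mixedDerivApprox_detPairPoly A B z).tendsto 0).mono_left
      nhdsWithin_le_nhds

theorem etaPoly_map_conj {A B : Matrix ι ι ℂ} (hA : A.IsHermitian) (hB : B.IsHermitian) :
    (etaPoly A B).map (starRingEnd ℂ) = etaPoly A B := by
  simp only [etaPoly, Polynomial.map_sum, Polynomial.map_mul, Polynomial.map_C,
    Polynomial.map_pow, Polynomial.map_X, map_mul, starRingEnd_apply, principalSub,
    (hA.submatrix _).star_det, (hB.submatrix _).star_det]

end DetPair

theorem stmt2 (n : ℕ) (A B : Matrix (Fin n) (Fin n) ℂ)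
    (hA : A.PosSemidef) (hB : B.IsHermitian) :
    etaPoly A (-B) = 0 ∨ ∀ z : ℂ, (etaPoly A (-B)).eval z = 0 → z.im = 0 :=
  (etaPoly_eq_zero_or_upperStable hA hB.neg).imp id fun hstable _ hz =>
    hstable.im_eq_zero_of_eval_eq_zero (etaPoly_map_conj hA.isHermitian hB.neg) hz
end

section
/- Let A and B be Hermitian n × n matrices with A positive definite. Then the number of zero roots (i.e., the multiplicity of 0 as a root) of η(zA,−B) equals the dimension of the kernel of B. -/
/-!
The coefficient of `z ^ k` in `η(zA, -B)` is `Σ_{|S| = k} det A[S] det (-B)[S']`. Principal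
minors of `B` of size larger than `rank B` vanish, so all coefficients below
`k = n - rank B` are zero. Writing `B = V D Vᴴ` with `V` of size `n × rank B` and `D` the real
diagonal of the nonzero eigenvalues, each principal minor of size `rank B` is
`det D · |det V[T, ·]|²`: they all have the sign of `det D`, and one of them is nonzero because
`V` has `rank B` linearly independent rows. As the principal minors of `A` are positive, the
coefficient at `k = n - rank B` is therefore nonzero.
-/

open Polynomial ComplexOrder

open Matrix

namespace Matrix

theorem rank_neg {m n R : Type*} [Fintype n] [CommRing R] (A : Matrix m n R) :
    (-A).rank = A.rank := by
  have : (-A).mulVecLin = -A.mulVecLin := by ext; simp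
  rw [rank, rank, this, LinearMap.range_neg]

theorem finrank_ker_mulVecLin {m n K : Type*} [Fintype n] [Field K] (A : Matrix m n K) :
    Module.finrank K (LinearMap.ker A.mulVecLin) = Fintype.card n - A.rank := by
  have := LinearMap.finrank_range_add_finrank_ker A.mulVecLin
  rw [Module.finrank_fintype_fun_eq_card] at this
  rw [rank]
  omega

theorem exists_card_eq_rank_linearIndepOn_rows {ι κ K : Type*} [Field K]
    [Fintype ι] [Fintype κ] (V : Matrix ι κ K) :
    ∃ T : Finset ι, T.card = V.rank ∧ LinearIndepOn K V.row T := by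
  classical
  obtain ⟨b, -, -, hspan, hli⟩ := exists_linearIndepOn_extension (K := K) (v := V.row)
    (linearIndepOn_empty K V.row) (Set.subset_univ _)
  have hsp : Submodule.span K (V.row '' b) = Submodule.span K (Set.range V.row) :=
    le_antisymm (Submodule.span_mono (Set.image_subset_range _ _))
      (Submodule.span_le.mpr (by simpa using hspan))
  refine ⟨b.toFinset, ?_, by simpa using hli⟩
  rw [Set.toFinset_card, ← finrank_span_eq_card hli, rank_eq_finrank_span_row, ← hsp,
    Set.image_eq_range]

theorem IsHermitian.exists_eq_mul_diagonal_mul_conjTranspose {𝕜 ι : Type*} [RCLike 𝕜]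
    [Fintype ι] [DecidableEq ι] {B : Matrix ι ι 𝕜} (hB : B.IsHermitian) :
    ∃ (V : Matrix ι (Fin B.rank) 𝕜) (d : Fin B.rank → ℝ), (∀ i, d i ≠ 0) ∧
      B = V * diagonal (fun i => (d i : 𝕜)) * Vᴴ := by
  let e : Fin B.rank ≃ {i // hB.eigenvalues i ≠ 0} :=
    (Fintype.equivFinOfCardEq hB.rank_eq_card_non_zero_eigs.symm).symm
  let U : Matrix ι ι 𝕜 := hB.eigenvectorUnitary
  have hspec : B = U * diagonal (fun i => (hB.eigenvalues i : 𝕜)) * Uᴴ :=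
    hB.spectral_theorem
  refine ⟨U.submatrix id (Subtype.val ∘ e), hB.eigenvalues ∘ Subtype.val ∘ e,
    fun i => (e i).2, ?_⟩
  ext j k
  refine (congrFun (congrFun hspec j) k).trans ?_
  rw [mul_apply, mul_apply]
  simp only [mul_diagonal, conjTranspose_apply, submatrix_apply, Function.comp_apply, id]
  rw [← Finset.sum_filter_of_ne (p := fun i => hB.eigenvalues i ≠ 0)
    (fun i _ h h0 => h (by simp [h0])), ← Finset.sum_subtype_eq_sum_filter,
    Finset.subtype_univ, ← e.sum_comp]

end Matrix

section PrincipalMinors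

variable {ι : Type*} [DecidableEq ι]

theorem det_principalSub_of_eq_mul_diagonal_mul_conjTranspose {κ : Type*} [Fintype κ]
    [DecidableEq κ] {B : Matrix ι ι ℂ} {V : Matrix ι κ ℂ} {d : κ → ℂ}
    (hB : B = V * diagonal d * Vᴴ) (T : Finset ι) (e : T ≃ κ) :
    (principalSub B T).det =
      (∏ i, d i) * (star (V.submatrix (Subtype.val ∘ e.symm) id).det *
        (V.submatrix (Subtype.val ∘ e.symm) id).det) := by
  subst hB
  set W := V.submatrix (Subtype.val ∘ e.symm) id
  have : principalSub (V * diagonal d * Vᴴ) T = (W * diagonal d * Wᴴ).submatrix e e := by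
    ext a b
    simp [principalSub, W, mul_apply]
  rw [this, det_submatrix_equiv_self, det_mul, det_mul, det_conjTranspose, det_diagonal]
  ring

variable [Fintype ι] {B : Matrix ι ι ℂ}

theorem det_principalSub_eq_zero_of_rank_lt {T : Finset ι} (hT : B.rank < T.card) :
    (principalSub B T).det = 0 := by
  by_contra h
  have hrank : (principalSub B T).rank = T.card := by
    rw [rank_of_isUnit _ ((isUnit_iff_isUnit_det _).mpr (Ne.isUnit h)), Fintype.card_coe]
  exact hT.not_ge (hrank ▸ rank_submatrix_le B _ _)

theorem Matrix.IsHermitian.exists_det_principalSub_ne_zero (hB : B.IsHermitian) :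
    ∃ T : Finset ι, T.card = B.rank ∧ (principalSub B T).det ≠ 0 := by
  obtain ⟨V, d, hd, hBV⟩ := hB.exists_eq_mul_diagonal_mul_conjTranspose
  have hV : V.rank = B.rank := by
    refine le_antisymm ((rank_le_card_width V).trans_eq (Fintype.card_fin _)) ?_
    calc B.rank = (V * diagonal (fun i => (d i : ℂ)) * Vᴴ).rank := congrArg rank hBV
      _ ≤ V.rank := (rank_mul_le_left _ _).trans (rank_mul_le_left _ _)
  obtain ⟨T, hT, hli⟩ := V.exists_card_eq_rank_linearIndepOn_rows
  rw [hV] at hT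
  let e : T ≃ Fin B.rank := T.equivFinOfCardEq hT
  have hW : (V.submatrix (Subtype.val ∘ e.symm) id).det ≠ 0 :=
    ((isUnit_iff_isUnit_det _).mp
      (linearIndependent_rows_iff_isUnit.mp (hli.comp _ e.symm.injective))).ne_zero
  refine ⟨T, hT, ?_⟩
  rw [det_principalSub_of_eq_mul_diagonal_mul_conjTranspose hBV T e]
  exact mul_ne_zero (Finset.prod_ne_zero_iff.mpr fun i _ => RCLike.ofReal_ne_zero.mpr (hd i))
    (mul_ne_zero (star_ne_zero.mpr hW) hW)

theorem Matrix.IsHermitian.det_principalSub_mul_det_principalSub_nonneg (hB : B.IsHermitian)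
    {T T' : Finset ι} (hT : T.card = B.rank) (hT' : T'.card = B.rank) :
    0 ≤ (principalSub B T).det * (principalSub B T').det := by
  obtain ⟨V, d, -, hBV⟩ := hB.exists_eq_mul_diagonal_mul_conjTranspose
  set p : ℂ := ∏ i, (d i : ℂ)
  have hp : star p = p := by simp [p, star_prod]
  rw [det_principalSub_of_eq_mul_diagonal_mul_conjTranspose hBV T (T.equivFinOfCardEq hT),
    det_principalSub_of_eq_mul_diagonal_mul_conjTranspose hBV T' (T'.equivFinOfCardEq hT')]
  set w := (V.submatrix (Subtype.val ∘ (T.equivFinOfCardEq hT).symm) id).det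
  set w' := (V.submatrix (Subtype.val ∘ (T'.equivFinOfCardEq hT').symm) id).det
  calc (0 : ℂ) ≤ star p * p * (star w * w) * (star w' * w') := by
        refine mul_nonneg (mul_nonneg ?_ ?_) ?_ <;> exact star_mul_self_nonneg _
    _ = p * (star w * w) * (p * (star w' * w')) := by rw [hp]; ring

end PrincipalMinors

section EtaPoly

variable {ι : Type*} [Fintype ι] [DecidableEq ι]

theorem coeff_etaPoly (A B : Matrix ι ι ℂ) (k : ℕ) :
    (etaPoly A B).coeff k =
      ∑ S ∈ Finset.univ.powersetCard k, (principalSub A S).det * (principalSub B Sᶜ).det := by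
  rw [etaPoly, finsetSum_coeff, Finset.powersetCard_eq_filter, Finset.powerset_univ,
    Finset.sum_filter]
  refine Finset.sum_congr rfl fun S _ => ?_
  rw [coeff_C_mul, coeff_X_pow, mul_ite, mul_one, mul_zero]
  simp only [eq_comm]

theorem coeff_etaPoly_eq_zero_of_add_rank_lt (A B : Matrix ι ι ℂ) {k : ℕ}
    (hk : k + B.rank < Fintype.card ι) : (etaPoly A B).coeff k = 0 := by
  rw [coeff_etaPoly]
  refine Finset.sum_eq_zero fun S hS => ?_
  rw [det_principalSub_eq_zero_of_rank_lt (T := Sᶜ), mul_zero]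
  rw [Finset.card_compl, (Finset.mem_powersetCard.mp hS).2]
  omega

theorem coeff_etaPoly_card_sub_rank_ne_zero {A B : Matrix ι ι ℂ} (hA : A.PosDef)
    (hB : B.IsHermitian) : (etaPoly A B).coeff (Fintype.card ι - B.rank) ≠ 0 := by
  obtain ⟨T₀, hT₀, hdet⟩ := hB.exists_det_principalSub_ne_zero
  have hcard : ∀ S ∈ (Finset.univ : Finset ι).powersetCard (Fintype.card ι - B.rank),
      Sᶜ.card = B.rank := by
    intro S hS
    rw [Finset.card_compl, (Finset.mem_powersetCard.mp hS).2]
    have := rank_le_card_height B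
    omega
  have hT₀c : T₀ᶜ ∈ Finset.univ.powersetCard (Fintype.card ι - B.rank) := by
    rw [Finset.mem_powersetCard, Finset.card_compl, hT₀]
    exact ⟨Finset.subset_univ _, rfl⟩
  have hA_det (S : Finset ι) : 0 < (principalSub A S).det :=
    (hA.submatrix Subtype.val_injective).det_pos
  suffices 0 < (etaPoly A B).coeff (Fintype.card ι - B.rank) * (principalSub B T₀).det from
    left_ne_zero_of_mul this.ne'
  rw [coeff_etaPoly, Finset.sum_mul]
  refine Finset.sum_pos' (fun S hS => ?_) ⟨T₀ᶜ, hT₀c, ?_⟩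
  · rw [mul_assoc]
    exact mul_nonneg (hA_det S).le
      (hB.det_principalSub_mul_det_principalSub_nonneg (hcard S hS) hT₀)
  · rw [mul_assoc, compl_compl]
    exact mul_pos (hA_det _) (lt_of_le_of_ne
      (hB.det_principalSub_mul_det_principalSub_nonneg hT₀ hT₀) (mul_ne_zero hdet hdet).symm)

end EtaPoly

theorem stmt5 (n : ℕ) (A B : Matrix (Fin n) (Fin n) ℂ)
    (hA : A.PosDef) (hB : B.IsHermitian) :
    (etaPoly A (-B)).rootMultiplicity 0 =
      Module.finrank ℂ (LinearMap.ker B.mulVecLin) := by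
  have hcoeff := coeff_etaPoly_card_sub_rank_ne_zero hA hB.neg
  rw [Matrix.rank_neg, Fintype.card_fin] at hcoeff
  have hne : etaPoly A (-B) ≠ 0 := fun h => hcoeff (by rw [h, coeff_zero])
  rw [rootMultiplicity_eq_natTrailingDegree', Matrix.finrank_ker_mulVecLin, Fintype.card_fin]
  refine le_antisymm (natTrailingDegree_le_of_ne_zero hcoeff)
    (le_natTrailingDegree hne fun k hk => coeff_etaPoly_eq_zero_of_add_rank_lt A (-B) ?_)
  rw [Matrix.rank_neg, Fintype.card_fin]
  have := rank_le_card_height B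
  omega
end

section
/- Every real stable homogeneous polynomial has all its nonzero coefficients of the same sign; in particular, if it has at least one positive coefficient then all its coefficients are nonnegative. -/
open MvPolynomial

/-- A real polynomial in `n` variables is real stable if (viewed over `ℂ`) it does not
vanish whenever all variables have positive imaginary part. -/
def RealStable {n : ℕ} (f : MvPolynomial (Fin n) ℝ) : Prop :=
  ∀ z : Fin n → ℂ, (∀ k, 0 < (z k).im) →
    MvPolynomial.eval z (f.map (algebraMap ℝ ℂ)) ≠ 0

/-!
Evaluating at `i • v` shows that a real stable form has no zeros on the open positive orthant.
For `v` in that orthant and `z` in the upper half-plane, all roots of `t ↦ f (z + t • v)` lie in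
the lower half-plane, so by Gauss–Lucas the directional derivative `∂ᵥ f = ∑ⱼ vⱼ ∂ⱼ f` is again
real stable, and homogeneous of one degree less. Induction on the degree then shows that every
coefficient of `f` has the sign of `f (1, …, 1)`: the coefficients of `∂ᵥ f` are the combinations
`∑ⱼ vⱼ (βⱼ + 1) c_{β + eⱼ}` of those of `f`, and all have the sign of `∂ᵥ f (1, …, 1)`, which does
not depend on `v` because the orthant is connected; letting `v` tend to a coordinate vector
isolates a single coefficient.
-/

theorem Polynomial.coeff_prod_of_natDegree_le_sum {R ι : Type*} [CommSemiring R] (s : Finset ι)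
    (f : ι → Polynomial R) (n : ι → ℕ) (h : ∀ i ∈ s, (f i).natDegree ≤ n i) :
    (∏ i ∈ s, f i).coeff (∑ i ∈ s, n i) = ∏ i ∈ s, (f i).coeff (n i) := by
  classical
  induction s using Finset.induction_on with
  | empty => simp
  | insert a s ha ih =>
    have hs : ∀ i ∈ s, (f i).natDegree ≤ n i := fun i hi => h i (Finset.mem_insert_of_mem hi)
    rw [Finset.prod_insert ha, Finset.sum_insert ha, Finset.prod_insert ha,
      Polynomial.coeff_mul_add_eq_of_natDegree_le (h a (Finset.mem_insert_self a s))
        ((Polynomial.natDegree_prod_le _ _).trans (Finset.sum_le_sum hs)), ih hs]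

theorem Polynomial.eval_derivative_ne_zero_of_isRoot_mem {P : Polynomial ℂ} (hP : 0 < P.degree)
    {s : Set ℂ} (hs : Convex ℝ s) (hroots : ∀ r, P.IsRoot r → r ∈ s) {w : ℂ} (hw : w ∉ s) :
    P.derivative.eval w ≠ 0 := fun h => hw <| by
  rw [eq_centerMass_of_eval_derivative_eq_zero hP h]
  refine hs.centerMass_mem (fun _ _ => derivRootWeight_nonneg _ _ _)
    (sum_derivRootWeight_pos hP w) fun r hr => hroots r ?_
  exact isRoot_of_mem_roots (Multiset.mem_toFinset.mp hr)

theorem IsPreconnected.mul_pos_of_ne_zero {X : Type*} [TopologicalSpace X] {s : Set X}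
    (hs : IsPreconnected s) {g : X → ℝ} (hg : ContinuousOn g s) (h0 : ∀ x ∈ s, g x ≠ 0)
    {a b : X} (ha : a ∈ s) (hb : b ∈ s) : 0 < g a * g b := by
  have of_le : ∀ {a b}, a ∈ s → b ∈ s → g a ≤ g b → 0 < g a * g b := by
    intro a b ha hb hab
    by_contra! hneg
    obtain ⟨x, hx, hx0⟩ := hs.intermediate_value ha hb hg
      (show (0 : ℝ) ∈ Set.Icc (g a) (g b) by constructor <;> nlinarith [h0 a ha, h0 b hb])
    exact h0 x hx hx0
  rcases le_total (g a) (g b) with hab | hba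
  · exact of_le ha hb hab
  · exact mul_comm (g a) (g b) ▸ of_le hb ha hba

theorem nonneg_of_forall_pos_sum_mul_nonneg {ι : Type*} [Fintype ι] {b : ι → ℝ}
    (h : ∀ v : ι → ℝ, (∀ k, 0 < v k) → 0 ≤ ∑ k, v k * b k) (j : ι) : 0 ≤ b j := by
  classical
  have hsingle : Pi.single j 1 ∈ closure (Set.univ.pi fun _ : ι => Set.Ioi (0 : ℝ)) := by
    rw [closure_pi_set, closure_Ioi]
    intro k _
    by_cases hk : k = j <;> simp [hk]
  have := closure_minimal (t := {v : ι → ℝ | 0 ≤ ∑ k, v k * b k})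
    (fun v (hv : v ∈ Set.univ.pi _) => h v fun k => hv k (Set.mem_univ k))
    (isClosed_le continuous_const (by fun_prop)) hsingle
  simpa [Pi.single_apply] using this

theorem mul_nonneg_of_mul_nonneg_of_mul_pos {K : Type*} [CommRing K] [LinearOrder K]
    [IsStrictOrderedRing K] {x y w : K} (hy : 0 ≤ x * y) (hw : 0 < x * w) : 0 ≤ w * y := by
  have hx : x ≠ 0 := by rintro rfl; simp at hw
  refine (mul_nonneg_iff_of_pos_right (mul_self_pos.mpr hx)).mp ?_
  calc (0 : K) ≤ (x * y) * (x * w) := mul_nonneg hy hw.le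
    _ = w * y * (x * x) := by ring

namespace MvPolynomial

variable {σ R : Type*} [CommSemiring R]

theorem eval_map_ofReal (f : MvPolynomial σ ℝ) (v : σ → ℝ) :
    eval (fun k => (v k : ℂ)) (f.map (algebraMap ℝ ℂ)) = eval v f :=
  (eval_map _ _ _).trans (eval₂_comp _ _ _).symm

noncomputable def lineRestrict (z v : σ → R) (F : MvPolynomial σ R) : Polynomial R :=
  aeval (fun k => Polynomial.C (v k) * Polynomial.X + Polynomial.C (z k)) F

theorem eval_lineRestrict (z v : σ → R) (F : MvPolynomial σ R) (t : R) :
    (lineRestrict z v F).eval t = eval (z + t • v) F := by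
  rw [lineRestrict, ← Polynomial.coe_aeval_eq_eval, comp_aeval_apply, aeval_eq_eval]
  congr 2 with k
  simp only [map_add, map_mul, Polynomial.aeval_C, Polynomial.aeval_X, Pi.add_apply,
    Pi.smul_apply, smul_eq_mul, Algebra.algebraMap_self, RingHom.id_apply]
  ring

variable [Fintype σ]

theorem IsHomogeneous.sum_eq_of_coeff_ne_zero {d : ℕ} {F : MvPolynomial σ R}
    (hF : F.IsHomogeneous d) {α : σ →₀ ℕ} (hα : F.coeff α ≠ 0) : ∑ i, α i = d := by
  rw [← Finsupp.degree_eq_sum, Finsupp.degree_eq_weight_one]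
  exact hF hα

theorem IsHomogeneous.exists_eq_add_single {d : ℕ} {F : MvPolynomial σ R}
    (hF : F.IsHomogeneous (d + 1)) {γ : σ →₀ ℕ} (hγ : F.coeff γ ≠ 0) :
    ∃ β j, γ = β + Finsupp.single j 1 := by
  obtain ⟨j, hj⟩ : ∃ j, γ j ≠ 0 := by
    by_contra! h
    simpa [h] using hF.sum_eq_of_coeff_ne_zero hγ
  have hle : Finsupp.single j 1 ≤ γ := Finsupp.single_le_iff.mpr (Nat.one_le_iff_ne_zero.mpr hj)
  exact ⟨γ - Finsupp.single j 1, j, (tsub_add_cancel_of_le hle).symm⟩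

theorem IsHomogeneous.eval_smul {d : ℕ} {F : MvPolynomial σ R} (hF : F.IsHomogeneous d)
    (c : R) (x : σ → R) : eval (c • x) F = c ^ d * eval x F := by
  rw [eval_eq', eval_eq', Finset.mul_sum]
  refine Finset.sum_congr rfl fun α hα => ?_
  simp only [Pi.smul_apply, smul_eq_mul, mul_pow, Finset.prod_mul_distrib,
    Finset.prod_pow_eq_pow_sum, hF.sum_eq_of_coeff_ne_zero (mem_support_iff.mp hα)]
  ring

theorem eval_one_eq_sum_coeff (F : MvPolynomial σ R) : eval 1 F = ∑ α ∈ F.support, coeff α F := by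
  simp [eval_eq']

theorem derivative_aeval (g : σ → Polynomial R) (F : MvPolynomial σ R) :
    Polynomial.derivative (aeval g F) =
      ∑ j, aeval g (pderiv j F) * Polynomial.derivative (g j) := by
  classical
  induction F using MvPolynomial.induction_on with
  | C a => simp
  | add p q hp hq => simp [hp, hq, add_mul, Finset.sum_add_distrib]
  | mul_X p i hp =>
    simp only [map_mul, aeval_X, Polynomial.derivative_mul, hp, pderiv_mul, pderiv_X, map_add,
      add_mul, Finset.sum_add_distrib, Finset.sum_mul]
    simp [Pi.single_apply, mul_right_comm]

noncomputable def dirDeriv (v : σ → R) (F : MvPolynomial σ R) : MvPolynomial σ R :=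
  ∑ j, C (v j) * pderiv j F

theorem eval_dirDeriv (v x : σ → R) (F : MvPolynomial σ R) :
    eval x (dirDeriv v F) = ∑ j, v j * eval x (pderiv j F) := by
  simp [dirDeriv]

theorem coeff_dirDeriv (v : σ → R) (F : MvPolynomial σ R) (β : σ →₀ ℕ) :
    coeff β (dirDeriv v F) = ∑ j, v j * (coeff (β + Finsupp.single j 1) F * (β j + 1)) := by
  simp [dirDeriv, coeff_sum, coeff_pderiv]

theorem map_dirDeriv {S : Type*} [CommSemiring S] (φ : R →+* S) (v : σ → R)
    (F : MvPolynomial σ R) : map φ (dirDeriv v F) = dirDeriv (φ ∘ v) (map φ F) := by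
  simp [dirDeriv, pderiv_map]

theorem IsHomogeneous.dirDeriv {d : ℕ} {F : MvPolynomial σ R} (hF : F.IsHomogeneous (d + 1))
    (v : σ → R) : (dirDeriv v F).IsHomogeneous d :=
  IsHomogeneous.sum _ _ _ fun j _ => (IsHomogeneous.pderiv (i := j) hF).C_mul (v j)

theorem IsHomogeneous.coeff_lineRestrict {d : ℕ} {F : MvPolynomial σ R} (hF : F.IsHomogeneous d)
    (z v : σ → R) : (lineRestrict z v F).coeff d = eval v F := by
  rw [lineRestrict, aeval_def, eval₂_eq', eval_eq', Polynomial.finsetSum_coeff]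
  refine Finset.sum_congr rfl fun α hα => ?_
  have hα := mem_support_iff.mp hα
  rw [Polynomial.algebraMap_eq, Polynomial.coeff_C_mul, ← hF.sum_eq_of_coeff_ne_zero hα,
    Polynomial.coeff_prod_of_natDegree_le_sum]
  · congr 1
    refine Finset.prod_congr rfl fun i _ => ?_
    simpa using Polynomial.coeff_pow_of_natDegree_le (m := α i)
      (Polynomial.natDegree_linear_le (a := v i) (b := z i))
  · intro i _
    simpa using Polynomial.natDegree_pow_le_of_le (α i)
      (Polynomial.natDegree_linear_le (a := v i) (b := z i))

theorem eval_derivative_lineRestrict_zero (z v : σ → R) (F : MvPolynomial σ R) :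
    (lineRestrict z v F).derivative.eval 0 = eval z (dirDeriv v F) := by
  rw [lineRestrict, derivative_aeval, eval_dirDeriv, Polynomial.eval_finsetSum]
  refine Finset.sum_congr rfl fun j _ => ?_
  rw [Polynomial.eval_mul, ← lineRestrict, eval_lineRestrict, zero_smul, add_zero]
  simp only [Polynomial.derivative_add, Polynomial.derivative_C_mul_X, Polynomial.derivative_C,
    add_zero, Polynomial.eval_C]
  exact mul_comm _ _

end MvPolynomial

namespace RealStable

variable {n d : ℕ} {f : MvPolynomial (Fin n) ℝ}

theorem eval_ne_zero_of_pos (hf : f.IsHomogeneous d) (hs : RealStable f) {v : Fin n → ℝ}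
    (hv : ∀ k, 0 < v k) : eval v f ≠ 0 := by
  intro h
  apply hs (Complex.I • fun k => (v k : ℂ)) (fun k => by simpa using hv k)
  rw [(hf.map _).eval_smul, eval_map_ofReal, h, Complex.ofReal_zero, mul_zero]

theorem dirDeriv (hf : f.IsHomogeneous (d + 1)) (hs : RealStable f) {v : Fin n → ℝ}
    (hv : ∀ k, 0 < v k) : RealStable (dirDeriv v f) := by
  intro z hz
  set q := lineRestrict z (fun k => (v k : ℂ)) (f.map (algebraMap ℝ ℂ))
  have hq : 0 < q.degree := by
    have htop : q.coeff (d + 1) ≠ 0 := by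
      rw [(hf.map _).coeff_lineRestrict, eval_map_ofReal]
      exact_mod_cast eval_ne_zero_of_pos hf hs hv
    exact Polynomial.natDegree_pos_iff_degree_pos.mp
      (Nat.succ_pos d |>.trans_le (Polynomial.le_natDegree_of_ne_zero htop))
  have hroots : ∀ r, q.IsRoot r → r.im < 0 := by
    intro r hr
    by_contra! hr_im
    refine hs _ (fun k => ?_) ((eval_lineRestrict _ _ _ r).symm.trans hr)
    simp only [Pi.add_apply, Pi.smul_apply, smul_eq_mul, Complex.add_im, Complex.mul_im,
      Complex.ofReal_im, Complex.ofReal_re, mul_zero]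
    nlinarith [hz k, hv k]
  have := Polynomial.eval_derivative_ne_zero_of_isRoot_mem hq (convex_halfSpace_im_lt 0) hroots
    (w := 0) (by simp)
  rw [map_dirDeriv]
  rwa [eval_derivative_lineRestrict_zero] at this

theorem eval_one_dirDeriv_mul_pos (hf : f.IsHomogeneous (d + 1)) (hs : RealStable f)
    {v w : Fin n → ℝ} (hv : ∀ k, 0 < v k) (hw : ∀ k, 0 < w k) :
    0 < eval 1 (MvPolynomial.dirDeriv v f) * eval 1 (MvPolynomial.dirDeriv w f) := by
  have horthant : IsPreconnected (Set.univ.pi fun _ : Fin n => Set.Ioi (0 : ℝ)) :=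
    (convex_pi fun _ _ => convex_Ioi 0).isPreconnected
  refine horthant.mul_pos_of_ne_zero (g := fun v => eval 1 (MvPolynomial.dirDeriv v f))
    (by simp only [eval_dirDeriv]; fun_prop) (fun u hu => ?_) (by simpa using hv)
    (by simpa using hw)
  have hu : ∀ k, 0 < u k := by simpa using hu
  exact (hs.dirDeriv hf hu).eval_ne_zero_of_pos (hf.dirDeriv u) fun _ => one_pos

theorem eval_one_mul_coeff_nonneg (hf : f.IsHomogeneous d) (hs : RealStable f)
    (γ : Fin n →₀ ℕ) : 0 ≤ eval 1 f * coeff γ f := by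
  induction d generalizing f γ with
  | zero =>
    rw [← totalDegree_zero_iff_isHomogeneous, totalDegree_eq_zero_iff_eq_C] at hf
    rw [hf, coeff_C, eval_C]
    split_ifs
    exacts [mul_self_nonneg _, (mul_zero _).ge]
  | succ d ih =>
    set s := eval 1 (MvPolynomial.dirDeriv 1 f)
    have hsign : ∀ v : Fin n → ℝ, (∀ k, 0 < v k) → 0 < eval 1 (MvPolynomial.dirDeriv v f) * s :=
      fun v hv => eval_one_dirDeriv_mul_pos hf hs hv fun _ => one_pos
    have hsucc : ∀ β j, 0 ≤ s * coeff (β + Finsupp.single j 1) f := by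
      intro β j
      have hb := nonneg_of_forall_pos_sum_mul_nonneg
        (b := fun j => s * (coeff (β + Finsupp.single j 1) f * (β j + 1))) (fun v hv => by
          have := mul_nonneg_of_mul_nonneg_of_mul_pos
            (ih (hf.dirDeriv v) (hs.dirDeriv hf hv) β) (hsign v hv)
          rw [coeff_dirDeriv, Finset.mul_sum] at this
          simpa only [mul_left_comm s] using this) j
      rw [← mul_assoc] at hb
      exact nonneg_of_mul_nonneg_left hb (by positivity)
    have hall : ∀ γ, 0 ≤ s * coeff γ f := by
      intro γ
      by_cases hγ : coeff γ f = 0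
      · simp [hγ]
      obtain ⟨β, j, rfl⟩ := hf.exists_eq_add_single hγ
      exact hsucc β j
    have hs_eval : 0 < s * eval 1 f := by
      refine lt_of_le_of_ne ?_ (mul_ne_zero ?_ (hs.eval_ne_zero_of_pos hf fun _ => one_pos)).symm
      · rw [eval_one_eq_sum_coeff, Finset.mul_sum]
        exact Finset.sum_nonneg fun α _ => hall α
      · exact fun h0 => (hsign 1 fun _ => one_pos).ne' (by simp [s, h0])
    exact mul_nonneg_of_mul_nonneg_of_mul_pos (hall γ) hs_eval

end RealStable

theorem stmt16 (n d : ℕ) (f : MvPolynomial (Fin n) ℝ)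
    (hhom : f.IsHomogeneous d) (hstab : RealStable f) :
    (∀ α β, f.coeff α ≠ 0 → f.coeff β ≠ 0 → 0 < f.coeff α * f.coeff β) ∧
    ((∃ α, 0 < f.coeff α) → ∀ β, 0 ≤ f.coeff β) := by
  have hsign := hstab.eval_one_mul_coeff_nonneg hhom
  have hone : eval 1 f ≠ 0 := hstab.eval_ne_zero_of_pos hhom fun _ => one_pos
  have hpos : ∀ α, f.coeff α ≠ 0 → 0 < eval 1 f * f.coeff α := fun α hα =>
    (hsign α).lt_of_ne (mul_ne_zero hone hα).symm
  refine ⟨fun α β hα hβ => ?_, fun ⟨α, hα⟩ β => ?_⟩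
  · exact (mul_nonneg_of_mul_nonneg_of_mul_pos (hsign β) (hpos α hα)).lt_of_ne
      (mul_ne_zero hα hβ).symm
  · exact nonneg_of_mul_nonneg_right
      (mul_nonneg_of_mul_nonneg_of_mul_pos (hsign β) (hpos α hα.ne')) hα
end

section
/- Let A be a Hermitian n × n matrix and S, T ⊆ {1,…,n} with |S ∩ T| = |S| − 1 = |T| − 1. Then for every real z, det(zI − A[S∪T]) · det(zI − A[S∩T]) ≤ det(zI − A[S]) · det(zI − A[T]), where each determinant is of the characteristic polynomial of the indicated principal submatrix (with identity of the appropriate size). -/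
open Matrix Polynomial

lemma det_im_eq_zero' {m : Type*} [Fintype m] [DecidableEq m] {M : Matrix m m ℂ}
    (hM : M.IsHermitian) : M.det.im = 0 := by
  have h : M.det = star M.det := by
    conv_lhs => rw [← hM.eq]
    exact M.det_conjTranspose
  have h2 := congrArg Complex.im h
  simp only [Complex.star_def, Complex.conj_im] at h2
  linarith

lemma det_smul_one_sub_eval' {m : Type*} [Fintype m] [DecidableEq m] (C : Matrix m m ℂ) (w : ℂ) :
    (w • (1 : Matrix m m ℂ) - C).det = Polynomial.eval w C.charpoly := by
  rw [Matrix.charpoly, ← Polynomial.coe_evalRingHom, RingHom.map_det]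
  congr 1
  ext i j
  by_cases h : i = j <;>
    simp [Matrix.map_apply, charmatrix_apply, Matrix.sub_apply, Matrix.smul_apply,
      Matrix.one_apply, Matrix.diagonal_apply, h]

lemma finite_bad' {m : Type*} [Fintype m] [DecidableEq m] (C : Matrix m m ℂ) :
    {z : ℝ | ((z : ℂ) • (1 : Matrix m m ℂ) - C).det = 0}.Finite := by
  have hne : C.charpoly ≠ 0 := (Matrix.charpoly_monic C).ne_zero
  have hfin := Polynomial.finite_setOf_isRoot hne
  have hsub : {z : ℝ | ((z : ℂ) • (1 : Matrix m m ℂ) - C).det = 0} ⊆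
      (fun z : ℝ => (z : ℂ)) ⁻¹' {x | C.charpoly.IsRoot x} := by
    intro z hz
    simp only [Set.mem_setOf_eq, Set.mem_preimage, Polynomial.IsRoot]
    rw [← det_smul_one_sub_eval']
    exact hz
  exact ((hfin.preimage (Set.injOn_of_injective Complex.ofReal_injective)).subset hsub)

open Matrix

lemma key' {m : Type*} [Fintype m] [DecidableEq m]
    (M : Matrix (m ⊕ Fin 2) (m ⊕ Fin 2) ℂ) (hM : M.IsHermitian)
    (hU : IsUnit (M.submatrix Sum.inl Sum.inl).det) :
    (M.det * (M.submatrix Sum.inl Sum.inl).det).re ≤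
    ((M.submatrix (Sum.map id fun _ : Unit => (0 : Fin 2))
        (Sum.map id fun _ : Unit => (0 : Fin 2))).det *
      (M.submatrix (Sum.map id fun _ : Unit => (1 : Fin 2))
        (Sum.map id fun _ : Unit => (1 : Fin 2))).det).re := by
  set P := M.toBlocks₁₁ with hPdef
  set Q := M.toBlocks₁₂ with hQdef
  set R := M.toBlocks₂₁ with hRdef
  set D := M.toBlocks₂₂ with hDdef
  have hMeq : M = fromBlocks P Q R D := (fromBlocks_toBlocks M).symm
  have hsubP : M.submatrix Sum.inl Sum.inl = P := rfl
  have hPh : P.IsHermitian := hM.submatrix Sum.inl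
  have hDh : D.IsHermitian := hM.submatrix Sum.inr
  have hRQ : R = Qᴴ := by
    ext k i
    exact (hM.apply (Sum.inr k) (Sum.inl i)).symm
  rw [hsubP] at hU
  haveI : Invertible P := P.invertibleOfIsUnitDet hU
  set C2 := D - R * ⅟P * Q with hC2def
  have hC2h : C2.IsHermitian := by
    rw [hC2def, hRQ, invOf_eq_nonsing_inv]
    exact hDh.sub (isHermitian_conjTranspose_mul_mul Q hPh.inv)
  have hb : C2 1 0 = star (C2 0 1) := (hC2h.apply 1 0).symm
  have hdetM : M.det = P.det * C2.det := by
    conv_lhs => rw [hMeq]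
    exact det_fromBlocks₁₁ P Q R D
  have hsub : ∀ k : Fin 2,
      (M.submatrix (Sum.map id fun _ : Unit => k) (Sum.map id fun _ : Unit => k)).det
        = P.det * C2 k k := by
    intro k
    have h1 : M.submatrix (Sum.map id fun _ : Unit => k) (Sum.map id fun _ : Unit => k)
        = fromBlocks P (Q.submatrix id fun _ : Unit => k)
            (R.submatrix (fun _ : Unit => k) id)
            (D.submatrix (fun _ : Unit => k) (fun _ : Unit => k)) := by
      rw [hMeq]; ext (i | i) (j | j) <;> rfl
    rw [h1, det_fromBlocks₁₁]
    congr 1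
    rw [det_unique]
    simp [hC2def, Matrix.sub_apply, Matrix.mul_apply, Matrix.submatrix_apply]
  have hdetC2 : C2.det = C2 0 0 * C2 1 1 - C2 0 1 * C2 1 0 := det_fin_two C2
  rw [hsubP, hdetM, hsub 0, hsub 1, hdetC2, hb]
  set a := P.det with hadef
  set b := C2 0 1 with hbdef
  have ha : a.im = 0 := by
    have h : a = star a := by
      conv_lhs => rw [hadef, ← hPh.eq]
      exact P.det_conjTranspose
    have h2 := congrArg Complex.im h
    simp only [Complex.star_def, Complex.conj_im] at h2
    linarith
  have haa : a = (a.re : ℂ) := by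
    apply Complex.ext <;> simp [ha]
  have e1 : a * (C2 0 0 * C2 1 1 - b * star b) * a
      = a * C2 0 0 * (a * C2 1 1) - a ^ 2 * (b * star b) := by ring
  rw [e1, Complex.sub_re]
  have e2 : (a ^ 2 * (b * star b)).re = a.re ^ 2 * Complex.normSq b := by
    rw [Complex.star_def, Complex.mul_conj, haa, ← Complex.ofReal_pow, ← Complex.ofReal_mul,
      Complex.ofReal_re]
    simp
  rw [e2]
  have := mul_nonneg (sq_nonneg a.re) (Complex.normSq_nonneg b)
  linarith

open Matrix

theorem stmt17 (n : ℕ) (A : Matrix (Fin n) (Fin n) ℂ) (hA : A.IsHermitian)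
    (S T : Finset (Fin n))
    (hS : S.card = (S ∩ T).card + 1) (hT : T.card = (S ∩ T).card + 1) :
    ∀ z : ℝ,
      ((z : ℂ) • 1 - principalSub A (S ∪ T)).det.re *
        ((z : ℂ) • 1 - principalSub A (S ∩ T)).det.re ≤
      ((z : ℂ) • 1 - principalSub A S).det.re *
        ((z : ℂ) • 1 - principalSub A T).det.re := by
  classical
  have hRS : S ∩ T ⊆ S := Finset.inter_subset_left
  have hRT : S ∩ T ⊆ T := Finset.inter_subset_right
  obtain ⟨i, hi⟩ : ∃ i, S \ (S ∩ T) = {i} :=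
    Finset.card_eq_one.mp (by rw [Finset.card_sdiff_of_subset hRS]; omega)
  obtain ⟨j, hj⟩ : ∃ j, T \ (S ∩ T) = {j} :=
    Finset.card_eq_one.mp (by rw [Finset.card_sdiff_of_subset hRT]; omega)
  have hiS : i ∈ S := (Finset.mem_sdiff.mp (hi ▸ Finset.mem_singleton_self i)).1
  have hiR : i ∉ S ∩ T := (Finset.mem_sdiff.mp (hi ▸ Finset.mem_singleton_self i)).2
  have hjT : j ∈ T := (Finset.mem_sdiff.mp (hj ▸ Finset.mem_singleton_self j)).1
  have hjR : j ∉ S ∩ T := (Finset.mem_sdiff.mp (hj ▸ Finset.mem_singleton_self j)).2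
  have hij : i ≠ j := by
    intro h
    exact hiR (Finset.mem_inter.mpr ⟨hiS, h ▸ hjT⟩)
  -- main algebraic step at a fixed good z
  have hkey : ∀ z : ℝ,
      ((z : ℂ) • 1 - principalSub A (S ∩ T)).det ≠ 0 →
      ((z : ℂ) • 1 - principalSub A (S ∪ T)).det.re *
        ((z : ℂ) • 1 - principalSub A (S ∩ T)).det.re ≤
      ((z : ℂ) • 1 - principalSub A S).det.re *
        ((z : ℂ) • 1 - principalSub A T).det.re := by
    intro z hz
    set B := (z : ℂ) • 1 - A with hBdef
    have hB : B.IsHermitian := by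
      simp only [Matrix.IsHermitian, hBdef, Matrix.conjTranspose_sub, Matrix.conjTranspose_smul,
        Matrix.conjTranspose_one, hA.eq, Complex.star_def, Complex.conj_ofReal]
    have hPS : ∀ X : Finset (Fin n),
        (z : ℂ) • 1 - principalSub A X = principalSub B X := by
      intro X
      ext a b
      simp only [principalSub, Matrix.sub_apply, Matrix.smul_apply, Matrix.submatrix_apply,
        Matrix.one_apply, hBdef, Subtype.coe_inj]
    rw [hPS, hPS, hPS, hPS]
    rw [hPS] at hz
    -- the embedding
    set φ : ((S ∩ T : Finset (Fin n)) : Type) ⊕ Fin 2 → Fin n :=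
      Sum.elim Subtype.val ![i, j] with hφ
    have hφi : φ (Sum.inr 0) = i := rfl
    have hφj : φ (Sum.inr 1) = j := rfl
    have hmemU : ∀ x, φ x ∈ S ∪ T := by
      rintro (r | k)
      · exact Finset.mem_union_left _ (hRS r.2)
      · fin_cases k
        · exact Finset.mem_union_left _ hiS
        · exact Finset.mem_union_right _ hjT
    have hmemS : ∀ x : ((S ∩ T : Finset (Fin n)) : Type) ⊕ Unit,
        φ (Sum.map id (fun _ => (0 : Fin 2)) x) ∈ S := by
      rintro (r | u)
      · exact hRS r.2
      · exact hiS
    have hmemT : ∀ x : ((S ∩ T : Finset (Fin n)) : Type) ⊕ Unit,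
        φ (Sum.map id (fun _ => (1 : Fin 2)) x) ∈ T := by
      rintro (r | u)
      · exact hRT r.2
      · exact hjT
    -- equivalences via surjectivity + card
    have cardU : Fintype.card (((S ∩ T : Finset (Fin n)) : Type) ⊕ Fin 2)
        = Fintype.card ((S ∪ T : Finset (Fin n)) : Type) := by
      simp only [Fintype.card_sum, Fintype.card_coe, Fintype.card_fin]
      have := Finset.card_union_add_card_inter S T
      omega
    have cardS : Fintype.card (((S ∩ T : Finset (Fin n)) : Type) ⊕ Unit)
        = Fintype.card ((S : Finset (Fin n)) : Type) := by
      simp only [Fintype.card_sum, Fintype.card_coe, Fintype.card_unit]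
      omega
    have cardT : Fintype.card (((S ∩ T : Finset (Fin n)) : Type) ⊕ Unit)
        = Fintype.card ((T : Finset (Fin n)) : Type) := by
      simp only [Fintype.card_sum, Fintype.card_coe, Fintype.card_unit]
      omega
    have surjU : Function.Surjective (fun x => (⟨φ x, hmemU x⟩ : ((S ∪ T : Finset (Fin n)) : Type))) := by
      rintro ⟨s, hs⟩
      rcases Finset.mem_union.mp hs with h | h
      · by_cases hmem : s ∈ S ∩ T
        · exact ⟨Sum.inl ⟨s, hmem⟩, rfl⟩
        · have : s ∈ S \ (S ∩ T) := Finset.mem_sdiff.mpr ⟨h, hmem⟩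
          rw [hi, Finset.mem_singleton] at this
          exact ⟨Sum.inr 0, by simp [hφi, this]⟩
      · by_cases hmem : s ∈ S ∩ T
        · exact ⟨Sum.inl ⟨s, hmem⟩, rfl⟩
        · have : s ∈ T \ (S ∩ T) := Finset.mem_sdiff.mpr ⟨h, hmem⟩
          rw [hj, Finset.mem_singleton] at this
          exact ⟨Sum.inr 1, by simp [hφj, this]⟩
    have surjS : Function.Surjective
        (fun x : ((S ∩ T : Finset (Fin n)) : Type) ⊕ Unit =>
          (⟨φ (Sum.map id (fun _ => (0 : Fin 2)) x), hmemS x⟩ : ((S : Finset (Fin n)) : Type))) := by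
      rintro ⟨s, hs⟩
      by_cases hmem : s ∈ S ∩ T
      · exact ⟨Sum.inl ⟨s, hmem⟩, rfl⟩
      · have : s ∈ S \ (S ∩ T) := Finset.mem_sdiff.mpr ⟨hs, hmem⟩
        rw [hi, Finset.mem_singleton] at this
        exact ⟨Sum.inr (), by simp [hφi, this]⟩
    have surjT : Function.Surjective
        (fun x : ((S ∩ T : Finset (Fin n)) : Type) ⊕ Unit =>
          (⟨φ (Sum.map id (fun _ => (1 : Fin 2)) x), hmemT x⟩ : ((T : Finset (Fin n)) : Type))) := by
      rintro ⟨s, hs⟩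
      by_cases hmem : s ∈ S ∩ T
      · exact ⟨Sum.inl ⟨s, hmem⟩, rfl⟩
      · have : s ∈ T \ (S ∩ T) := Finset.mem_sdiff.mpr ⟨hs, hmem⟩
        rw [hj, Finset.mem_singleton] at this
        exact ⟨Sum.inr (), by simp [hφj, this]⟩
    have bijU := (Fintype.bijective_iff_surjective_and_card _).mpr ⟨surjU, cardU⟩
    have bijS := (Fintype.bijective_iff_surjective_and_card _).mpr ⟨surjS, cardS⟩
    have bijT := (Fintype.bijective_iff_surjective_and_card _).mpr ⟨surjT, cardT⟩
    set eU := Equiv.ofBijective _ bijU with heU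
    set eS := Equiv.ofBijective _ bijS with heS
    set eT := Equiv.ofBijective _ bijT with heT
    set M := B.submatrix φ φ with hM
    have hMh : M.IsHermitian := hB.submatrix φ
    have hP : M.submatrix Sum.inl Sum.inl
        = principalSub B (S ∩ T) := rfl
    have hUdet : IsUnit (M.submatrix Sum.inl Sum.inl).det := by
      rw [hP]
      exact isUnit_iff_ne_zero.mpr hz
    have hk := key' M hMh hUdet
    have d1 : M.det = (principalSub B (S ∪ T)).det := by
      have : M = ((B.submatrix Subtype.val Subtype.val :
          Matrix ((S ∪ T : Finset (Fin n)) : Type) _ ℂ)).submatrix eU eU := rfl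
      rw [this, det_submatrix_equiv_self]
      rfl
    have d2 : (M.submatrix (Sum.map id fun _ : Unit => (0 : Fin 2))
          (Sum.map id fun _ : Unit => (0 : Fin 2))).det
        = (principalSub B S).det := by
      have : M.submatrix (Sum.map id fun _ : Unit => (0 : Fin 2))
            (Sum.map id fun _ : Unit => (0 : Fin 2))
          = (principalSub B S).submatrix eS eS := rfl
      rw [this, det_submatrix_equiv_self]
    have d3 : (M.submatrix (Sum.map id fun _ : Unit => (1 : Fin 2))
          (Sum.map id fun _ : Unit => (1 : Fin 2))).det
        = (principalSub B T).det := by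
      have : M.submatrix (Sum.map id fun _ : Unit => (1 : Fin 2))
            (Sum.map id fun _ : Unit => (1 : Fin 2))
          = (principalSub B T).submatrix eT eT := rfl
      rw [this, det_submatrix_equiv_self]
    rw [d1, d2, d3, hP] at hk
    have himU : (principalSub B (S ∪ T)).det.im = 0 :=
      det_im_eq_zero' (hB.submatrix (Subtype.val : ((S ∪ T : Finset (Fin n)) : Type) → Fin n))
    have himR : (principalSub B (S ∩ T)).det.im = 0 :=
      det_im_eq_zero' (hB.submatrix (Subtype.val : ((S ∩ T : Finset (Fin n)) : Type) → Fin n))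
    have himS : (principalSub B S).det.im = 0 :=
      det_im_eq_zero' (hB.submatrix (Subtype.val : ((S : Finset (Fin n)) : Type) → Fin n))
    have himT : (principalSub B T).det.im = 0 :=
      det_im_eq_zero' (hB.submatrix (Subtype.val : ((T : Finset (Fin n)) : Type) → Fin n))
    simp only [Complex.mul_re, himU, himR, himS, himT, mul_zero, zero_mul, sub_zero] at hk
    exact hk
  -- continuity argument
  intro z
  set F : ℝ → ℝ := fun w =>
    (((w : ℂ) • 1 - principalSub A S).det.re *
      ((w : ℂ) • 1 - principalSub A T).det.re) -
    (((w : ℂ) • 1 - principalSub A (S ∪ T)).det.re *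
      ((w : ℂ) • 1 - principalSub A (S ∩ T)).det.re)
    with hF
  have hc : ∀ (X : Finset (Fin n)),
      Continuous fun w : ℝ =>
        ((w : ℂ) • 1 - (A.submatrix Subtype.val Subtype.val : Matrix (X : Finset (Fin n)) _ ℂ)).det.re := by
    intro X
    apply Complex.continuous_re.comp
    apply Continuous.matrix_det
    apply continuous_matrix
    intro a b
    simp only [Matrix.sub_apply, Matrix.smul_apply, smul_eq_mul]
    exact (Complex.continuous_ofReal.mul continuous_const).sub continuous_const
  have hcont : Continuous F := ((hc S).mul (hc T)).sub ((hc (S ∪ T)).mul (hc (S ∩ T)))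
  have hclosed : IsClosed {w : ℝ | 0 ≤ F w} := isClosed_le continuous_const hcont
  have hsub2 : {w : ℝ | ((w : ℂ) • 1 -
      principalSub A (S ∩ T)).det = 0}ᶜ
      ⊆ {w : ℝ | 0 ≤ F w} := by
    intro w hw
    exact sub_nonneg.mpr (hkey w hw)
  have hd : Dense {w : ℝ | 0 ≤ F w} :=
    (((finite_bad' _).countable.dense_compl ℝ)).mono hsub2
  have hz : z ∈ closure {w : ℝ | 0 ≤ F w} := by
    rw [hd.closure_eq]; trivial
  rw [hclosed.closure_eq] at hz
  exact sub_nonneg.mp hz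
end

section
/- Let A be a Hermitian n × n matrix and S, T ⊆ {1,…,n} with |S ∩ T| = |S| − 1 = |T| − 1. Then det(A[S∪T]) det(A[S∩T]) ≤ det(A[S]) det(A[T]). -/
/-!
Write `S ∪ T = R ∪ {i, j}` with `R = S ∩ T`. Sylvester's (Desnanot–Jacobi) identity
expresses `det A[R ∪ {i, j}] * det A[R]` as the `2 × 2` determinant of the bordered minors
`det A[R + a, R + b]`, `a, b ∈ {i, j}`: when `A[R]` is invertible, every bordered minor is
`det A[R]` times an entry of the Schur complement of `A[R]`, and the general case follows by
continuity along `A + t • 1`. For Hermitian `A` the two off-diagonal bordered minors are complex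
conjugates, so the identity reads `det A[S ∪ T] * det A[R] = det A[S] * det A[T] - |c| ^ 2`.
-/

open Matrix

namespace Matrix

theorem toBlocks₁₁_add_smul_one {m n α : Type*} [DecidableEq m] [DecidableEq n] [CommRing α]
    (M : Matrix (m ⊕ n) (m ⊕ n) α) (t : α) :
    (M + t • 1).toBlocks₁₁ = M.toBlocks₁₁ + t • 1 := by
  ext i j
  by_cases h : i = j <;> simp [toBlocks₁₁, one_apply, h]

variable {κ α : Type*}

def selectInr (k : Fin 2) : κ ⊕ Unit → κ ⊕ Fin 2 := Sum.elim Sum.inl fun _ => Sum.inr k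

theorem sumElim_comp_selectInr {ι : Type*} (f : κ → ι) (g : Fin 2 → ι) (k : Fin 2) :
    Sum.elim f g ∘ selectInr k = Sum.elim f fun _ => g k := by
  funext x
  cases x <;> rfl

variable [Fintype κ] [DecidableEq κ]

def borderedMinor [CommRing α] (M : Matrix (κ ⊕ Fin 2) (κ ⊕ Fin 2) α) (a b : Fin 2) : α :=
  (M.submatrix (selectInr a) (selectInr b)).det

theorem borderedMinor_eq_det_mul_schur [CommRing α] (M : Matrix (κ ⊕ Fin 2) (κ ⊕ Fin 2) α)
    [Invertible M.toBlocks₁₁] (a b : Fin 2) :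
    borderedMinor M a b = M.toBlocks₁₁.det *
      (M.toBlocks₂₂ - M.toBlocks₂₁ * ⅟M.toBlocks₁₁ * M.toBlocks₁₂) a b := by
  have hblocks : M.submatrix (selectInr a) (selectInr b) =
      fromBlocks M.toBlocks₁₁ (of fun k (_ : Unit) => M (Sum.inl k) (Sum.inr b))
        (of fun (_ : Unit) k => M (Sum.inr a) (Sum.inl k))
        (of fun _ _ => M (Sum.inr a) (Sum.inr b)) := by
    ext (x | x) (y | y) <;> rfl
  rw [borderedMinor, hblocks, det_fromBlocks₁₁, det_unique (n := Unit)]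
  rfl

theorem det_mul_det_toBlocks₁₁_of_invertible [CommRing α]
    (M : Matrix (κ ⊕ Fin 2) (κ ⊕ Fin 2) α) [Invertible M.toBlocks₁₁] :
    M.det * M.toBlocks₁₁.det = borderedMinor M 0 0 * borderedMinor M 1 1 -
      borderedMinor M 0 1 * borderedMinor M 1 0 := by
  have hM : M.det = M.toBlocks₁₁.det *
      (M.toBlocks₂₂ - M.toBlocks₂₁ * ⅟M.toBlocks₁₁ * M.toBlocks₁₂).det := by
    conv_lhs => rw [← fromBlocks_toBlocks M]
    exact det_fromBlocks₁₁ ..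
  simp only [hM, det_fin_two, borderedMinor_eq_det_mul_schur]
  ring

theorem det_mul_det_toBlocks₁₁ (M : Matrix (κ ⊕ Fin 2) (κ ⊕ Fin 2) ℂ) :
    M.det * M.toBlocks₁₁.det = borderedMinor M 0 0 * borderedMinor M 1 1 -
      borderedMinor M 0 1 * borderedMinor M 1 0 := by
  let N : ℂ → Matrix (κ ⊕ Fin 2) (κ ⊕ Fin 2) ℂ := fun t => M + t • 1
  have hN : Continuous N := continuous_const.add (continuous_id.smul continuous_const)
  have hminor (a b : Fin 2) : Continuous fun t => borderedMinor (N t) a b :=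
    (hN.matrix_submatrix _ _).matrix_det
  -- `(N t).toBlocks₁₁` is singular only at roots of the characteristic polynomial of `-M₁₁`
  have hsingular : {t | (N t).toBlocks₁₁.det = 0}.Finite := by
    refine (Polynomial.finite_setOfPred_isRoot
      (charpoly_monic (-M.toBlocks₁₁)).ne_zero).subset fun t ht => ?_
    simp only [Set.mem_ofPred_eq, Polynomial.IsRoot, eval_charpoly] at ht ⊢
    rwa [toBlocks₁₁_add_smul_one, add_comm, ← sub_neg_eq_add, smul_one_eq_diagonal] at ht
  have hregular : Set.EqOn (fun t => (N t).det * (N t).toBlocks₁₁.det)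
      (fun t => borderedMinor (N t) 0 0 * borderedMinor (N t) 1 1 -
        borderedMinor (N t) 0 1 * borderedMinor (N t) 1 0)
      {t | (N t).toBlocks₁₁.det = 0}ᶜ := fun t ht => by
    have := invertibleOfIsUnitDet _ (isUnit_iff_ne_zero.mpr ht)
    exact det_mul_det_toBlocks₁₁_of_invertible (N t)
  have hzero := congrFun
    (((hN.matrix_det).mul (hN.matrix_submatrix Sum.inl Sum.inl).matrix_det).ext_on
      (Set.Countable.dense_compl ℂ hsingular.countable)
      (((hminor 0 0).mul (hminor 1 1)).sub ((hminor 0 1).mul (hminor 1 0))) hregular) 0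
  simp only [N, Pi.mul_apply, Pi.sub_apply, zero_smul, add_zero] at hzero
  exact hzero

theorem IsHermitian.ofReal_re_det {n : Type*} [Fintype n] [DecidableEq n] {A : Matrix n n ℂ}
    (hA : A.IsHermitian) : (A.det.re : ℂ) = A.det :=
  Complex.conj_eq_iff_re.mp <| by rw [← Complex.star_def, ← det_conjTranspose, hA.eq]

theorem IsHermitian.re_det_mul_re_det_toBlocks₁₁_le
    {M : Matrix (κ ⊕ Fin 2) (κ ⊕ Fin 2) ℂ} (hM : M.IsHermitian) :
    M.det.re * M.toBlocks₁₁.det.re ≤ (borderedMinor M 0 0).re * (borderedMinor M 1 1).re := by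
  have hconj : borderedMinor M 1 0 = star (borderedMinor M 0 1) := by
    rw [borderedMinor, borderedMinor, ← det_conjTranspose, conjTranspose_submatrix, hM.eq]
  have hreal (k : Fin 2) : ((borderedMinor M k k).re : ℂ) = borderedMinor M k k :=
    (hM.submatrix (selectInr k)).ofReal_re_det
  have hsylvester := det_mul_det_toBlocks₁₁ M
  rw [hconj, Complex.star_def, Complex.mul_conj, ← hM.ofReal_re_det,
    ← IsHermitian.ofReal_re_det (A := M.toBlocks₁₁) (hM.submatrix Sum.inl),
    ← hreal 0, ← hreal 1] at hsylvester
  have hsylvester_re : M.det.re * M.toBlocks₁₁.det.re =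
      (borderedMinor M 0 0).re * (borderedMinor M 1 1).re -
        Complex.normSq (borderedMinor M 0 1) := by
    exact_mod_cast hsylvester
  linarith [Complex.normSq_nonneg (borderedMinor M 0 1)]

theorem IsHermitian.re_det_submatrix_sumElim_le {ι : Type*} {A : Matrix ι ι ℂ}
    (hA : A.IsHermitian) (f : κ → ι) (i j : ι) :
    (A.submatrix (Sum.elim f ![i, j]) (Sum.elim f ![i, j])).det.re *
        (A.submatrix f f).det.re ≤
      (A.submatrix (Sum.elim f fun _ : Unit => i) (Sum.elim f fun _ : Unit => i)).det.re *
        (A.submatrix (Sum.elim f fun _ : Unit => j) (Sum.elim f fun _ : Unit => j)).det.re := by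
  have h := (hA.submatrix (Sum.elim f ![i, j])).re_det_mul_re_det_toBlocks₁₁_le
  simp only [borderedMinor, submatrix_submatrix, sumElim_comp_selectInr] at h
  exact h

end Matrix

theorem Finset.injective_sumElim_val {ι β : Type*} (R : Finset ι) {g : β → ι}
    (hg : Function.Injective g) (hgR : ∀ b, g b ∉ R) :
    Function.Injective (Sum.elim (Subtype.val : R → ι) g) :=
  Subtype.val_injective.sumElim hg fun r b h => hgR b (h ▸ r.2)

theorem det_submatrix_eq_det_principalSub {ι β : Type*} [DecidableEq ι] [Fintype β]
    [DecidableEq β] (A : Matrix ι ι ℂ) (W : Finset ι) {f : β → ι}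
    (hf : Function.Injective f) (hW : Set.range f = W) :
    (A.submatrix f f).det = (principalSub A W).det := by
  have hmem (b : β) : f b ∈ W := by rw [← Finset.mem_coe, ← hW]; exact Set.mem_range_self b
  have hbij : Function.Bijective fun b => (⟨f b, hmem b⟩ : W) := by
    refine ⟨fun b c h => hf (congrArg Subtype.val h), fun ⟨w, hw⟩ => ?_⟩
    obtain ⟨b, rfl⟩ : w ∈ Set.range f := hW ▸ hw
    exact ⟨b, rfl⟩
  exact det_submatrix_equiv_self (Equiv.ofBijective _ hbij) (principalSub A W)

theorem re_det_principalSub_insert_union_insert_le {ι : Type*} [DecidableEq ι]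
    {A : Matrix ι ι ℂ} (hA : A.IsHermitian) (R : Finset ι) {i j : ι} (hiR : i ∉ R)
    (hjR : j ∉ R) (hij : i ≠ j) :
    (principalSub A (insert i R ∪ insert j R)).det.re * (principalSub A R).det.re ≤
      (principalSub A (insert i R)).det.re * (principalSub A (insert j R)).det.re := by
  have hconst (k : ι) : Function.Injective fun _ : Unit => k := fun _ _ _ => rfl
  have key := hA.re_det_submatrix_sumElim_le (Subtype.val : R → ι) i j
  rwa [det_submatrix_eq_det_principalSub A (insert i R ∪ insert j R)
      (R.injective_sumElim_val (injective_pair_iff_ne.mpr hij)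
        (Fin.forall_fin_two.mpr ⟨hiR, hjR⟩))
      (by simp [Set.Sum.elim_range, range_cons]),
    det_submatrix_eq_det_principalSub A (insert i R)
      (R.injective_sumElim_val (hconst i) fun _ => hiR) (by simp [Set.Sum.elim_range]),
    det_submatrix_eq_det_principalSub A (insert j R)
      (R.injective_sumElim_val (hconst j) fun _ => hjR) (by simp [Set.Sum.elim_range])] at key

theorem stmt18 (n : ℕ) (A : Matrix (Fin n) (Fin n) ℂ) (hA : A.IsHermitian)
    (S T : Finset (Fin n))
    (hS : S.card = (S ∩ T).card + 1) (hT : T.card = (S ∩ T).card + 1) :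
    (principalSub A (S ∪ T)).det.re * (principalSub A (S ∩ T)).det.re ≤
      (principalSub A S).det.re * (principalSub A T).det.re := by
  obtain ⟨i, hiST, hSi⟩ :=
    Finset.exists_eq_insert_iff.mpr ⟨Finset.inter_subset_left, hS.symm⟩
  obtain ⟨j, hjST, hTj⟩ :=
    Finset.exists_eq_insert_iff.mpr ⟨Finset.inter_subset_right, hT.symm⟩
  have hij : i ≠ j := by
    rintro rfl
    exact hiST (Finset.mem_inter.mpr
      ⟨hSi ▸ Finset.mem_insert_self .., hTj ▸ Finset.mem_insert_self ..⟩)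
  have key := re_det_principalSub_insert_union_insert_le hA (S ∩ T) hiST hjST hij
  rwa [hSi, hTj] at key
end

section
/- Let A be a Hermitian n × n matrix with det(A) = 0. Then for all i, j ∈ {1,…,n}, det(A[{i}′]) · det(A[{j}′]) ≥ 0, where A[{i}′] is the principal submatrix obtained by deleting row and column i. -/
open Matrix

private lemma ker_pair {m : ℕ} (A : Matrix (Fin (m+1)) (Fin (m+1)) ℂ) (a b : Fin (m+1))
    (hM : (A.submatrix b.succAbove a.succAbove).det ≠ 0)
    (u v : Fin (m+1) → ℂ) (hu : A.mulVec u = 0) (hv : A.mulVec v = 0) (r : Fin (m+1)) :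
    u r * v a = v r * u a := by
  set w : Fin (m+1) → ℂ := v a • u - u a • v with hw
  have hwk : A.mulVec w = 0 := by
    rw [hw, mulVec_sub, mulVec_smul, mulVec_smul, hu, hv]; simp
  have hwa : w a = 0 := by simp [hw]; ring
  set M := A.submatrix b.succAbove a.succAbove with hMdef
  have hMw : M.mulVec (w ∘ a.succAbove) = 0 := by
    funext l
    have h0 : A.mulVec w (b.succAbove l) = 0 := by rw [hwk]; rfl
    rw [mulVec, dotProduct, Fin.sum_univ_succAbove _ a, hwa, mul_zero, zero_add] at h0
    simpa [mulVec, dotProduct, hMdef] using h0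
  have hws : w ∘ a.succAbove = 0 := by
    have hinv := Matrix.nonsing_inv_mul M hM.isUnit
    have : M⁻¹.mulVec (M.mulVec (w ∘ a.succAbove)) = w ∘ a.succAbove := by
      rw [mulVec_mulVec, hinv, one_mulVec]
    rw [hMw, mulVec_zero] at this
    exact this.symm
  have hwz : ∀ s, w s = 0 := by
    intro s
    rcases eq_or_ne s a with h | h
    · rw [h]; exact hwa
    · obtain ⟨k, hk⟩ := Fin.exists_succAbove_eq h
      rw [← hk]; exact congrFun hws k
  have := hwz r
  simp [hw] at this
  linear_combination this

private lemma adj_minor {m : ℕ} (A : Matrix (Fin (m+1)) (Fin (m+1)) ℂ) (hdet : A.det = 0)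
    (i j : Fin (m+1)) :
    A.adjugate i i * A.adjugate j j = A.adjugate i j * A.adjugate j i := by
  set B := A.adjugate with hB
  by_cases h0 : B = 0
  · simp [h0]
  · have : ∃ a b, B a b ≠ 0 := by
      by_contra h
      push_neg at h
      exact h0 (by ext a b; simpa using h a b)
    obtain ⟨a, b, hab⟩ := this
    have hM : (A.submatrix b.succAbove a.succAbove).det ≠ 0 := by
      intro h
      rw [hB, Matrix.adjugate_fin_succ_eq_det_submatrix, h, mul_zero] at hab
      exact hab rfl
    have hker : ∀ c, A.mulVec (fun r => B r c) = 0 := by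
      intro c
      funext r
      have := congrFun (congrFun (Matrix.mul_adjugate A) r) c
      rw [hdet] at this
      simpa [mulVec, dotProduct, Matrix.mul_apply, hB] using this
    have key : ∀ c r, B r c * B a b = B r b * B a c := fun c r =>
      ker_pair A a b hM (fun r => B r c) (fun r => B r b) (hker c) (hker b) r
    have h1 := key i i
    have h2 := key j j
    have h3 := key j i
    have h4 := key i j
    have hcancel : B i i * B j j * (B a b * B a b) = B i j * B j i * (B a b * B a b) := by
      linear_combination (B j j * B a b) * h1 + (B i b * B a i) * h2
        - (B j i * B a b) * h3 - (B i b * B a j) * h4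
    exact mul_right_cancel₀ (mul_ne_zero hab hab) hcancel

private lemma principal_eq_adj {m : ℕ} (A : Matrix (Fin (m+1)) (Fin (m+1)) ℂ) (i : Fin (m+1)) :
    (principalSub A {i}ᶜ).det = A.adjugate i i := by
  rw [Matrix.adjugate_fin_succ_eq_det_submatrix]
  rw [show ((-1 : ℂ) ^ (i + i : ℕ)) = 1 by rw [← two_mul]; simp [pow_mul], one_mul]
  let e : Fin m ≃ {x : Fin (m+1) // x ∈ ({i}ᶜ : Finset (Fin (m+1)))} :=
    (finSuccAboveEquiv i).trans (Equiv.subtypeEquivRight (by simp))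
  rw [← Matrix.det_submatrix_equiv_self e (principalSub A {i}ᶜ)]
  rfl

theorem stmt19 (n : ℕ) (A : Matrix (Fin n) (Fin n) ℂ) (hA : A.IsHermitian)
    (hdet : A.det = 0) (i j : Fin n) :
    0 ≤ (principalSub A {i}ᶜ).det.re * (principalSub A {j}ᶜ).det.re := by
  cases n with
  | zero => exact absurd hdet (by simp [Matrix.det_isEmpty])
  | succ m =>
    set B := A.adjugate with hB
    have hBh : B.IsHermitian := hA.adjugate
    have hij : B j i = starRingEnd ℂ (B i j) := by
      have := congrFun (congrFun hBh.eq j) i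
      simpa [Matrix.conjTranspose_apply] using this.symm
    have hmin : B i i * B j j = B i j * B j i := adj_minor A hdet i j
    have hprod : B i i * B j j = (Complex.normSq (B i j) : ℂ) := by
      rw [hmin, hij, Complex.mul_conj]
    have hii : (B i i).im = 0 := by
      have := congrFun (congrFun hBh.eq i) i
      have h2 : starRingEnd ℂ (B i i) = B i i := by
        simpa [Matrix.conjTranspose_apply] using this
      exact Complex.conj_eq_iff_im.mp h2
    have hjj : (B j j).im = 0 := by
      have := congrFun (congrFun hBh.eq j) j
      have h2 : starRingEnd ℂ (B j j) = B j j := by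
        simpa [Matrix.conjTranspose_apply] using this
      exact Complex.conj_eq_iff_im.mp h2
    have hre : (B i i).re * (B j j).re = Complex.normSq (B i j) := by
      have := congrArg Complex.re hprod
      rwa [Complex.mul_re, hii, hjj, mul_zero, sub_zero, Complex.ofReal_re] at this
    rw [principal_eq_adj A i, principal_eq_adj A j, ← hB, hre]
    exact Complex.normSq_nonneg _
end
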